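/- arXiv:2501.13267 — 12 statements merged into one kernel-verified Lean document; each statement's English description precedes it below -/
import Mathlib

section
/- Let (d;a) = (d_1; a_0,…,a_n) be an h-regular pair with exactly one degree, where h is a positive integer, n ≥ 1, and a_i ∤ h for every i = 0,…,n. Then δ(d;a) ≥ F^h(a_0,…,a_n). -/
open Finset

/-- The amplitude `δ` of the (sub)pair given by the degrees `d` indexed by `D`
and the weights `a` indexed by `A`. -/
def deltaOn {ι κ : Type*} (D : Finset ι) (d : ι → ℕ) (A : Finset κ) (a : κ → ℕ) : ℤ :=
  (∑ j ∈ D, (d j : ℤ)) - ∑ i ∈ A, (a i : ℤ)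

/-- The amplitude of a full pair `(d;a)`. -/
def deltaPair {ι κ : Type*} [Fintype ι] [Fintype κ] (d : ι → ℕ) (a : κ → ℕ) : ℤ :=
  deltaOn univ d univ a

/-- `h`-regularity of the (sub)pair given by the degrees `d` indexed by `D` and the
weights `a` indexed by `A`: for every nonempty subset `I ⊆ A` of the weight indices with
`a_I := gcd_{i ∈ I} a i > 1`, either there are `|I|` pairwise distinct degree indices
`p ∈ D` with `a_I ∣ d p`, or `a_I ∣ h`. -/
def IsHRegularOn {ι κ : Type*} (h : ℕ) (D : Finset ι) (d : ι → ℕ)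
    (A : Finset κ) (a : κ → ℕ) : Prop :=
  ∀ I : Finset κ, I ⊆ A → I.Nonempty → 1 < I.gcd a →
    (∃ P : Finset ι, P ⊆ D ∧ P.card = I.card ∧ ∀ j ∈ P, I.gcd a ∣ d j) ∨ I.gcd a ∣ h

/-- `h`-regularity of a full pair `(d;a)`. -/
def IsHRegularPair {ι κ : Type*} [Fintype ι] [Fintype κ] (h : ℕ) (d : ι → ℕ)
    (a : κ → ℕ) : Prop :=
  IsHRegularOn h univ d univ a

/-- The generalised `1/h`-Frobenius number `F^h` of the weights indexed by `A`.
Letting `g` be the gcd of the weights, this is the largest integer `z` divisible by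
`lcm g h` that is not a nonnegative integral combination of the weights; this agrees
with the renormalised definition `F^h = g * F^{h / gcd (g,h)} (a/g)`.  For `g = 1`
it is the largest multiple of `h` that is not a nonnegative integral combination of
the weights (so it equals `-h` if every positive multiple of `h` is such a combination),
and `frobOn 1 A a` is the ordinary Frobenius number `F` (so `F = -1` if some weight
equals `1`). -/
noncomputable def frobOn {κ : Type*} (h : ℕ) (A : Finset κ) (a : κ → ℕ) : ℤ :=
  sSup {z : ℤ | ((Nat.lcm (A.gcd a) h : ℕ) : ℤ) ∣ z ∧
    ¬ ∃ x : κ → ℕ, ((∑ i ∈ A, x i * a i : ℕ) : ℤ) = z}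

/-- The generalised `1/h`-Frobenius number `F^h` of a full tuple of weights. -/
noncomputable def frobNum {κ : Type*} [Fintype κ] (h : ℕ) (a : κ → ℕ) : ℤ :=
  frobOn h univ a

/-!
A weight `aᵢ` with `aᵢ ∤ h` is `> 1`, so regularity at `{i}` makes it divide the single degree
`d`, while regularity at a pair `{i, j}`, which cannot be matched with two distinct degrees,
forces `gcd(aᵢ, aⱼ) ∣ h`. Then `aⱼ` does not divide the lcm `L'` of the other weights of a set
`A`, so both `L'` and `aⱼ` are proper divisors of `L = lcm A`, whence `L' + aⱼ ≤ L`. Inductively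
`∑ aᵢ ≤ lcm a ≤ d`, and dropping weights one at a time down to a pair, where Sylvester's theorem
applies, every multiple `z` of `h` with `z > lcm a - ∑ aᵢ` is a nonnegative combination of the
weights. Hence `F^h(a) ≤ lcm a - ∑ aᵢ ≤ δ(d;a)`.
-/

theorem exists_mul_add_mul_eq_of_lcm_lt {p q z : ℕ} (hp : 0 < p) (hz : Nat.gcd p q ∣ z)
    (hlt : Nat.lcm p q < z + p + q) : ∃ x y : ℕ, x * p + y * q = z := by
  obtain ⟨g, p', q', hg, hcop, rfl, rfl⟩ := Nat.exists_coprime' (Nat.gcd_pos_of_pos_left q hp)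
  rw [Nat.gcd_mul_right, hcop.gcd_eq_one, one_mul] at hz
  obtain ⟨z', rfl⟩ := hz
  rw [Nat.lcm_mul_right, hcop.lcm_eq_mul] at hlt
  have hlt' : p' * q' < z' + p' + q' :=
    Nat.lt_of_mul_lt_mul_right (a := g) (by linarith)
  have hpred : p'.pred * q'.pred ≤ z' := by
    rcases p' with _ | p'
    · simp
    rcases q' with _ | q'
    · simp
    simp only [Nat.pred_succ]
    nlinarith
  obtain ⟨x, y, hxy⟩ :=
    Nat.exists_add_mul_eq_of_gcd_dvd_of_mul_pred_le p' q' z' (by simp [hcop.gcd_eq_one]) hpred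
  exact ⟨x, y, by rw [← hxy]; ring⟩

theorem dvd_lcm_of_dvd_lcm_of_gcd_dvd {m x y k : ℕ} (hx : x ≠ 0) (hy : y ≠ 0) (hk : k ≠ 0)
    (hm : m ∣ Nat.lcm x y) (hmx : Nat.gcd m x ∣ k) : m ∣ Nat.lcm k y := by
  have hm0 : m ≠ 0 := ne_zero_of_dvd_ne_zero (Nat.lcm_ne_zero hx hy) hm
  rw [← Nat.factorization_le_iff_dvd hm0 (Nat.lcm_ne_zero hx hy), Nat.factorization_lcm hx hy] at hm
  rw [← Nat.factorization_le_iff_dvd (Nat.gcd_ne_zero_left hm0) hk,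
    Nat.factorization_gcd hm0 hx] at hmx
  rw [← Nat.factorization_le_iff_dvd hm0 (Nat.lcm_ne_zero hk hy), Nat.factorization_lcm hk hy]
  intro p
  have hmp := hm p
  have hmxp := hmx p
  simp only [Finsupp.sup_apply, Finsupp.inf_apply] at hmp hmxp ⊢
  omega

theorem dvd_of_dvd_lcm_of_forall_gcd_dvd {κ : Type*} [DecidableEq κ] {a : κ → ℕ} {m k : ℕ}
    (ha : ∀ i, a i ≠ 0) (hk : k ≠ 0) (B : Finset κ) (hgcd : ∀ i ∈ B, Nat.gcd m (a i) ∣ k)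
    (hm : m ∣ Nat.lcm k (B.lcm a)) : m ∣ k := by
  induction B using Finset.induction_on with
  | empty => simpa using hm
  | insert j B _ ih =>
    refine ih (fun i hi => hgcd i (mem_insert_of_mem hi)) ?_
    rw [Finset.lcm_insert, lcm_eq_nat_lcm, ← Nat.lcm_assoc, Nat.lcm_comm k, Nat.lcm_assoc] at hm
    have hL : Nat.lcm k (B.lcm a) ≠ 0 :=
      Nat.lcm_ne_zero hk (Finset.lcm_ne_zero_iff.2 fun i _ => ha i)
    simpa using dvd_lcm_of_dvd_lcm_of_gcd_dvd (ha j) hL hk hm (hgcd j (mem_insert_self j B))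

namespace IsHRegularOn

variable {ι κ : Type*} {h : ℕ} {D : Finset ι} {d : ι → ℕ} {A : Finset κ} {a : κ → ℕ}

theorem exists_dvd (hreg : IsHRegularOn h D d A a) {i : κ} (hi : i ∈ A) (hai : 1 < a i)
    (hndvd : ¬ a i ∣ h) : ∃ p ∈ D, a i ∣ d p := by
  rcases hreg {i} (singleton_subset_iff.2 hi) (singleton_nonempty i) (by simpa using hai) with
    ⟨P, hPD, hcard, hP⟩ | hdvd
  · obtain ⟨p, rfl⟩ := card_eq_one.1 (hcard.trans (card_singleton i))
    exact ⟨p, hPD (mem_singleton_self p), by simpa using hP p (mem_singleton_self p)⟩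
  · exact absurd (by simpa using hdvd) hndvd

theorem gcd_dvd_of_card_lt (hreg : IsHRegularOn h D d A a) {I : Finset κ} (hIA : I ⊆ A)
    (hI : I.gcd a ≠ 0) (hcard : #D < #I) : I.gcd a ∣ h := by
  rcases Nat.lt_or_ge 1 (I.gcd a) with h1 | h1
  · rcases hreg I hIA (card_pos.1 (by omega)) h1 with ⟨P, hPD, hPI, -⟩ | hdvd
    · exact absurd (card_le_card hPD) (by omega)
    · exact hdvd
  · exact (show I.gcd a = 1 by omega) ▸ one_dvd h

end IsHRegularOn

section

variable {κ : Type*} [DecidableEq κ] {h : ℕ} {a : κ → ℕ}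

theorem lcm_add_le_lcm_insert (ha : ∀ i, 0 < a i) (hnd : ∀ i, ¬ a i ∣ h)
    (hpair : Pairwise fun i j => Nat.gcd (a i) (a j) ∣ h) {j : κ} {B : Finset κ} (hj : j ∉ B)
    (hB : B.Nonempty) : B.lcm a + a j ≤ (insert j B).lcm a := by
  have hh : h ≠ 0 := fun h0 => hnd j (h0 ▸ dvd_zero _)
  have hM : (insert j B).lcm a ≠ 0 := Finset.lcm_ne_zero_iff.2 fun i _ => (ha i).ne'
  have hMj : a j ∣ (insert j B).lcm a := Finset.dvd_lcm (mem_insert_self j B)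
  have hMB : B.lcm a ∣ (insert j B).lcm a := Finset.lcm_mono (subset_insert j B)
  have hjB : ¬ a j ∣ B.lcm a := fun hdvd =>
    hnd j <| dvd_of_dvd_lcm_of_forall_gcd_dvd (fun i => (ha i).ne') hh B
      (fun i hi => hpair (ne_of_mem_of_not_mem hi hj).symm) (dvd_lcm_of_dvd_right hdvd h)
  obtain ⟨i, hi⟩ := hB
  have hMi : a i ∣ (insert j B).lcm a := Finset.dvd_lcm (mem_insert_of_mem hi)
  have hMne : (insert j B).lcm a ≠ a j := fun e =>
    hnd i (Nat.gcd_eq_left (e ▸ hMi) ▸ hpair (ne_of_mem_of_not_mem hi hj))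
  have two_mul_le {x : ℕ} (hx : x ∣ (insert j B).lcm a) (hne : (insert j B).lcm a ≠ x) :
      2 * x ≤ (insert j B).lcm a := by
    by_contra! hlt
    exact hne (Nat.eq_of_dvd_of_lt_two_mul hM hx hlt)
  have hB2 := two_mul_le hMB fun e => hjB (e ▸ hMj)
  have hj2 := two_mul_le hMj hMne
  omega

theorem sum_le_lcm (ha : ∀ i, 0 < a i) (hnd : ∀ i, ¬ a i ∣ h)
    (hpair : Pairwise fun i j => Nat.gcd (a i) (a j) ∣ h) {A : Finset κ} (hA : A.Nonempty) :
    ∑ i ∈ A, a i ≤ A.lcm a := by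
  induction hA using Finset.Nonempty.cons_induction with
  | singleton j => simp
  | cons j B hj hB ih =>
    have := lcm_add_le_lcm_insert ha hnd hpair hj hB
    rw [sum_cons, cons_eq_insert]
    omega

theorem exists_sum_mul_eq_of_lcm_lt (ha : ∀ i, 0 < a i) (hnd : ∀ i, ¬ a i ∣ h)
    (hpair : Pairwise fun i j => Nat.gcd (a i) (a j) ∣ h) {A : Finset κ} (hA : 1 < #A) {z : ℕ}
    (hz : h ∣ z) (hlt : A.lcm a < z + ∑ i ∈ A, a i) : ∃ x : κ → ℕ, ∑ i ∈ A, x i * a i = z := by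
  have hne : A.Nonempty := card_pos.1 (by omega)
  induction hne using Finset.Nonempty.cons_induction with
  | singleton i => simp at hA
  | cons j B hj hB ih =>
    rw [card_cons] at hA
    rw [sum_cons, cons_eq_insert] at hlt
    rcases (show #B = 1 ∨ 1 < #B by omega) with hB1 | hB2
    · obtain ⟨i, rfl⟩ := card_eq_one.1 hB1
      have hij : j ≠ i := by simpa using hj
      obtain ⟨x, y, hxy⟩ := exists_mul_add_mul_eq_of_lcm_lt (ha j) ((hpair hij).trans hz)
        (by simp [lcm_eq_nat_lcm] at hlt; omega)
      refine ⟨fun k => if k = j then x else y, ?_⟩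
      simpa [sum_pair hij, hij.symm] using hxy
    · have hsplit := lcm_add_le_lcm_insert ha hnd hpair hj hB
      obtain ⟨x, hx⟩ := ih hB2 (by omega)
      refine ⟨Function.update x j 0, ?_⟩
      rw [sum_cons, Function.update_self, zero_mul, zero_add, ← hx]
      exact sum_congr rfl fun i hi => by rw [Function.update_of_ne (ne_of_mem_of_not_mem hi hj)]

end

theorem frobOn_le {κ : Type*} {h : ℕ} {A : Finset κ} {a : κ → ℕ} {N : ℤ} (hN : 0 ≤ N)
    (hrep : ∀ z : ℕ, Nat.lcm (A.gcd a) h ∣ z → N < z → ∃ x : κ → ℕ, ∑ i ∈ A, x i * a i = z) :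
    frobOn h A a ≤ N := by
  rw [frobOn]
  -- `sSup ∅ = 0` in `ℤ`, hence the hypothesis `0 ≤ N`.
  rcases Set.eq_empty_or_nonempty {z : ℤ | ((Nat.lcm (A.gcd a) h : ℕ) : ℤ) ∣ z ∧
      ¬ ∃ x : κ → ℕ, ((∑ i ∈ A, x i * a i : ℕ) : ℤ) = z} with hS | hS
  · rw [hS, Int.csSup_empty]
    exact hN
  refine csSup_le hS ?_
  rintro z ⟨hdvd, hnrep⟩
  by_contra! hlt
  lift z to ℕ using by omega
  obtain ⟨x, hx⟩ := hrep z (by exact_mod_cast hdvd) hlt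
  exact hnrep ⟨x, by exact_mod_cast hx⟩

theorem codim_one_frobenius_bound_general (h n : ℕ) (hn : 1 ≤ n)
    (d : Fin 1 → ℕ) (a : Fin (n + 1) → ℕ)
    (hd : ∀ j, 0 < d j) (ha : ∀ i, 0 < a i)
    (hreg : IsHRegularPair h d a) (hnd : ∀ i, ¬ a i ∣ h) :
    deltaPair d a ≥ frobNum h a := by
  have hdvd : ∀ i, a i ∣ d 0 := fun i => by
    have hai : a i ≠ 1 := fun e => hnd i (e ▸ one_dvd h)
    obtain ⟨p, -, hp⟩ := hreg.exists_dvd (mem_univ i) (by have := ha i; omega) (hnd i)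
    rwa [Subsingleton.elim p 0] at hp
  have hpair : Pairwise fun i j => Nat.gcd (a i) (a j) ∣ h := fun i j hij => by
    simpa [gcd_eq_nat_gcd] using hreg.gcd_dvd_of_card_lt (subset_univ {i, j})
      (by simpa using (Nat.gcd_pos_of_pos_left _ (ha i)).ne') (by simp [card_pair hij])
  have hlcm : univ.lcm a ≤ d 0 := Nat.le_of_dvd (hd 0) (Finset.lcm_dvd_iff.2 fun i _ => hdvd i)
  have hsum : ∑ i, a i ≤ univ.lcm a := sum_le_lcm ha hnd hpair univ_nonempty
  have hδ : deltaPair d a = ((d 0 - ∑ i, a i : ℕ) : ℤ) := by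
    rw [deltaPair, deltaOn, Nat.cast_sub (hsum.trans hlcm)]
    simp
  rw [ge_iff_le, frobNum, hδ]
  refine frobOn_le (Int.natCast_nonneg _) fun z hz hlt => ?_
  exact exists_sum_mul_eq_of_lcm_lt ha hnd hpair (by simp; omega)
    ((Nat.dvd_lcm_right _ h).trans hz) (by omega)

/-- **Theorem (codimension 1, `1/h`-Frobenius bound).**
If `(d;a) = (d₁; a₀,…,aₙ)` is an `h`-regular pair with exactly one degree, `n ≥ 1`, and
`aᵢ ∤ h` for all `i`, then `δ(d;a) ≥ F^h(a₀,…,aₙ)`. -/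
theorem codim_one_frobenius_bound (h n : ℕ) (hh : 0 < h) (hn : 1 ≤ n)
    (d : Fin 1 → ℕ) (a : Fin (n + 1) → ℕ)
    (hd : ∀ j, 0 < d j) (ha : ∀ i, 0 < a i)
    (hreg : IsHRegularPair h d a) (hnd : ∀ i, ¬ a i ∣ h) :
    deltaPair d a ≥ frobNum h a :=
  codim_one_frobenius_bound_general h n hn d a hd ha hreg hnd
end

section
/- Let a_0,…,a_n and a_0' be positive integers such that a_0 ∣ a_0' and gcd(a_0,a_1,…,a_n) = gcd(a_0',a_1,…,a_n). Then for every positive integer h, F^h(a_0',a_1,…,a_n) ≥ F^h(a_0,a_1,…,a_n). -/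
open Finset

lemma finset_gcd_bezout {κ : Type*} [DecidableEq κ] (A : Finset κ) (a : κ → ℕ) :
    ∃ c : κ → ℤ, ∑ i ∈ A, c i * (a i : ℤ) = ((A.gcd a : ℕ) : ℤ) := by
  induction A using Finset.induction_on with
  | empty => exact ⟨0, by simp⟩
  | @insert j s hj ih =>
    obtain ⟨c, hc⟩ := ih
    refine ⟨fun i => if i = j then Nat.gcdA (a j) (s.gcd a)
      else Nat.gcdB (a j) (s.gcd a) * c i, ?_⟩
    rw [Finset.sum_insert hj]
    have hs : ∑ i ∈ s, (if i = j then Nat.gcdA (a j) (s.gcd a)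
        else Nat.gcdB (a j) (s.gcd a) * c i) * (a i : ℤ)
        = Nat.gcdB (a j) (s.gcd a) * ((s.gcd a : ℕ) : ℤ) := by
      rw [← hc, Finset.mul_sum]
      refine Finset.sum_congr rfl fun i hi => ?_
      have : i ≠ j := fun hij => hj (hij ▸ hi)
      rw [if_neg this]; ring
    rw [hs]; simp only [if_pos rfl]; rw [Finset.gcd_insert]
    have := Nat.gcd_eq_gcd_ab (a j) (s.gcd a)
    push_cast [GCDMonoid.gcd]
    push_cast at this
    rw [this]; ring

lemma rep_large {κ : Type*} [Fintype κ] [DecidableEq κ] (a : κ → ℕ) (i₀ : κ)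
    (ha : ∀ i, 0 < a i) :
    ∃ N : ℕ, ∀ m : ℕ, N ≤ m → Finset.univ.gcd a ∣ m →
      ∃ x : κ → ℕ, ∑ i, x i * a i = m := by
  obtain ⟨c, hc⟩ := finset_gcd_bezout (univ : Finset κ) a
  set g := (univ : Finset κ).gcd a with hg
  set p := a i₀ with hp
  have hppos : 0 < p := ha i₀
  have hpz : (0 : ℤ) < (p : ℤ) := by exact_mod_cast hppos
  refine ⟨p * ∑ i, a i, fun m hm hgm => ?_⟩
  obtain ⟨q, hq⟩ := hgm
  set x0 : κ → ℕ := fun i => (((q : ℤ) * c i) % (p : ℤ)).toNat with hx0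
  have hx0cast : ∀ i, (x0 i : ℤ) = ((q : ℤ) * c i) % (p : ℤ) := fun i =>
    Int.toNat_of_nonneg (Int.emod_nonneg _ (by positivity))
  have hx0lt : ∀ i, x0 i < p := by
    intro i
    have h1 : ((q : ℤ) * c i) % (p : ℤ) < p := Int.emod_lt_of_pos _ hpz
    have h2 := hx0cast i
    omega
  set t := ∑ i, x0 i * a i with ht
  have htlt : t < p * ∑ i, a i := by
    calc t ≤ ∑ i, (p - 1) * a i := Finset.sum_le_sum fun i _ =>
          Nat.mul_le_mul_right _ (by have := hx0lt i; omega)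
      _ = (p - 1) * ∑ i, a i := by rw [Finset.mul_sum]
      _ < p * ∑ i, a i := by
          have : Nonempty κ := ⟨i₀⟩
          have hS : 0 < ∑ i, a i :=
            Finset.sum_pos (fun i _ => ha i) Finset.univ_nonempty
          exact (Nat.mul_lt_mul_right hS).mpr (by omega)
  have htm : t ≤ m := le_of_lt (lt_of_lt_of_le htlt hm)
  -- divisibility of m - t by p, over ℤ
  have hdvd : (p : ℤ) ∣ (m : ℤ) - (t : ℤ) := by
    have hmz : (m : ℤ) = ∑ i, ((q : ℤ) * c i) * (a i : ℤ) := by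
      have : (m : ℤ) = (g : ℤ) * q := by exact_mod_cast hq
      rw [this, ← hc, Finset.sum_mul]
      exact Finset.sum_congr rfl fun i _ => by ring
    have htz : (t : ℤ) = ∑ i, (((q : ℤ) * c i) % (p : ℤ)) * (a i : ℤ) := by
      rw [ht]
      push_cast
      exact Finset.sum_congr rfl fun i _ => by rw [hx0cast i]
    rw [hmz, htz, ← Finset.sum_sub_distrib]
    refine Finset.dvd_sum fun i _ => ?_
    have : (q : ℤ) * c i - ((q : ℤ) * c i) % (p : ℤ)
        = (p : ℤ) * (((q : ℤ) * c i) / (p : ℤ)) := by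
      have := Int.mul_ediv_add_emod ((q : ℤ) * c i) (p : ℤ)
      linarith
    rw [← sub_mul, this]
    exact Dvd.dvd.mul_right (Dvd.intro _ rfl) _
  have hdvdn : p ∣ m - t := by
    have : (p : ℤ) ∣ ((m - t : ℕ) : ℤ) := by
      rwa [Nat.cast_sub htm]
    exact_mod_cast this
  obtain ⟨k, hk⟩ := hdvdn
  refine ⟨fun i => x0 i + if i = i₀ then k else 0, ?_⟩
  have : ∑ i, (x0 i + if i = i₀ then k else 0) * a i
      = t + ∑ i, (if i = i₀ then k else 0) * a i := by
    rw [ht, ← Finset.sum_add_distrib]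
    exact Finset.sum_congr rfl fun i _ => by ring
  rw [this]
  simp only [ite_mul, zero_mul, Finset.sum_ite_eq', Finset.mem_univ, if_pos, ← hp]
  rw [Nat.mul_comm k p]
  omega


/-- **Lemma (monotonicity of `F^h` under replacing a weight by a multiple).**
If `a₀ ∣ a₀'` and `gcd(a₀',a₁,…,aₙ) = gcd(a₀,a₁,…,aₙ)`, then
`F^h(a₀',a₁,…,aₙ) ≥ F^h(a₀,a₁,…,aₙ)` for every positive integer `h`. -/
theorem frobenius_mono_of_dvd (n : ℕ) (a : Fin (n + 1) → ℕ) (a₀' : ℕ)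
    (ha : ∀ i, 0 < a i) (ha₀' : 0 < a₀') (hdvd : a 0 ∣ a₀')
    (hgcd : Finset.univ.gcd (Function.update a 0 a₀') = Finset.univ.gcd a)
    (h : ℕ) (hh : 0 < h) :
    frobNum h (Function.update a 0 a₀') ≥ frobNum h a := by
  classical
  set a' := Function.update a 0 a₀' with ha'def
  have ha'0 : a' 0 = a₀' := Function.update_self _ _ _
  have ha'ne : ∀ i : Fin (n + 1), i ≠ 0 → a' i = a i :=
    fun i hi => Function.update_of_ne hi _ _
  have ha' : ∀ i, 0 < a' i := by
    intro i
    by_cases hi : i = 0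
    · rw [hi, ha'0]; exact ha₀'
    · rw [ha'ne i hi]; exact ha i
  set g := (univ : Finset (Fin (n + 1))).gcd a with hg
  have hgpos : 0 < g := by
    rcases Nat.eq_zero_or_pos g with h0 | h0
    · exfalso
      have h1 : (univ : Finset (Fin (n + 1))).gcd a = 0 := by rw [← hg]; exact h0
      have h2 := Finset.gcd_eq_zero_iff.mp h1 0 (Finset.mem_univ _)
      have := ha 0
      omega
    · exact h0
  set L := Nat.lcm g h with hL
  have hLpos : 0 < L := Nat.pos_of_ne_zero (Nat.lcm_ne_zero (by omega) (by omega))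
  have hLz : (0 : ℤ) < (L : ℤ) := by exact_mod_cast hLpos
  unfold frobNum frobOn
  rw [hgcd, ← hg, ← hL]
  set S : Set ℤ := {z : ℤ | ((L : ℕ) : ℤ) ∣ z ∧
    ¬ ∃ x : Fin (n + 1) → ℕ, ((∑ i, x i * a i : ℕ) : ℤ) = z} with hSdef
  set S' : Set ℤ := {z : ℤ | ((L : ℕ) : ℤ) ∣ z ∧
    ¬ ∃ x : Fin (n + 1) → ℕ, ((∑ i, x i * a' i : ℕ) : ℤ) = z} with hS'def
  have hsub : S ⊆ S' := by
    rintro z ⟨hdz, hnr⟩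
    refine ⟨hdz, ?_⟩
    rintro ⟨x, hx⟩
    apply hnr
    refine ⟨fun i => if i = 0 then x 0 * (a₀' / a 0) else x i, ?_⟩
    rw [← hx]
    congr 1
    refine Finset.sum_congr rfl fun i _ => ?_
    dsimp only
    by_cases hi : i = 0
    · subst hi
      rw [if_pos rfl, ha'0, Nat.mul_assoc, Nat.div_mul_cancel hdvd]
    · rw [if_neg hi, ha'ne i hi]
  have hne : S.Nonempty := by
    refine ⟨-(L : ℤ), dvd_neg.mpr dvd_rfl, ?_⟩
    rintro ⟨x, hx⟩
    have h0 : (0 : ℤ) ≤ ((∑ i, x i * a i : ℕ) : ℤ) := Int.natCast_nonneg _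
    rw [hx] at h0
    linarith
  have hbdd : BddAbove S' := by
    obtain ⟨N, hN⟩ := rep_large a' 0 ha'
    refine ⟨(N : ℤ), fun z hz => ?_⟩
    by_contra hzN
    push_neg at hzN
    obtain ⟨hdz, hnr⟩ := hz
    apply hnr
    have hz0 : (0 : ℤ) ≤ z := le_of_lt (lt_of_le_of_lt (Int.natCast_nonneg N) hzN)
    have hzt : ((z.toNat : ℕ) : ℤ) = z := Int.toNat_of_nonneg hz0
    have hgz : g ∣ z.toNat := by
      have h1 : ((g : ℕ) : ℤ) ∣ z := dvd_trans (by exact_mod_cast Nat.dvd_lcm_left g h) hdz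
      rw [← hzt] at h1
      exact_mod_cast h1
    have hNz : N ≤ z.toNat := by omega
    have hg' : (univ : Finset (Fin (n + 1))).gcd a' = g := by rw [hg]; exact hgcd
    obtain ⟨x, hx⟩ := hN z.toNat hNz (hg' ▸ hgz)
    exact ⟨x, by rw [hx, hzt]⟩
  exact csSup_le_csSup hbdd hne hsub
end

section
/- Let a_0,…,a_n be positive integers and m a positive integer such that, for some index k with 0 ≤ k < n, gcd(a_0,…,a_k, m·a_{k+1},…,m·a_n) = gcd(a_0,…,a_k,a_{k+1},…,a_n). Then for every positive integer h, F^h(a_0,…,a_k, m·a_{k+1},…,m·a_n) ≥ F^h(a_0,…,a_n). -/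
open Finset

/-- Bézout for finset gcds over `ℕ`, with integer coefficients. -/
lemma bezout_finset {κ : Type*} [DecidableEq κ] (b : κ → ℕ) (A : Finset κ) :
    ∃ c : κ → ℤ, ∑ i ∈ A, c i * (b i : ℤ) = ((A.gcd b : ℕ) : ℤ) := by
  induction A using Finset.induction_on with
  | empty => exact ⟨0, by simp⟩
  | @insert j A hj ih =>
    obtain ⟨c, hc⟩ := ih
    refine ⟨fun i => if i = j then Nat.gcdA (b j) (A.gcd b)
      else Nat.gcdB (b j) (A.gcd b) * c i, ?_⟩
    rw [Finset.sum_insert hj, Finset.gcd_insert]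
    have hrw : ∑ i ∈ A, (if i = j then Nat.gcdA (b j) (A.gcd b)
        else Nat.gcdB (b j) (A.gcd b) * c i) * (b i : ℤ)
        = Nat.gcdB (b j) (A.gcd b) * ∑ i ∈ A, c i * (b i : ℤ) := by
      rw [Finset.mul_sum]
      refine Finset.sum_congr rfl fun i hi => ?_
      rw [if_neg (by rintro rfl; exact hj hi)]; ring
    rw [hrw, hc]
    have hB : ((Nat.gcd (b j) (A.gcd b) : ℕ) : ℤ)
        = (b j : ℤ) * Nat.gcdA (b j) (A.gcd b) + ((A.gcd b : ℕ) : ℤ) * Nat.gcdB (b j) (A.gcd b) :=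
      Nat.gcd_eq_gcd_ab _ _
    have hg : (GCDMonoid.gcd (b j) (A.gcd b) : ℕ) = Nat.gcd (b j) (A.gcd b) := rfl
    simp only [hg, hB, eq_self_iff_true, if_true]
    ring

/-- Every sufficiently large multiple of the gcd of positive weights is a
nonnegative integral combination of the weights. -/
lemma rep_large_s6 {n : ℕ} (b : Fin (n + 1) → ℕ) (hb : ∀ i, 0 < b i) :
    ∃ N : ℤ, ∀ z : ℤ, N ≤ z → ((Finset.univ.gcd b : ℕ) : ℤ) ∣ z →
      ∃ x : Fin (n + 1) → ℕ, ((∑ i, x i * b i : ℕ) : ℤ) = z := by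
  classical
  obtain ⟨c, hc⟩ := bezout_finset b (Finset.univ : Finset (Fin (n + 1)))
  have hPpos : (0 : ℤ) < (b 0 : ℤ) := by exact_mod_cast hb 0
  refine ⟨(∑ i, (b i : ℤ)) * (b 0 : ℤ), fun z hz hdvd => ?_⟩
  obtain ⟨q, hq⟩ := hdvd
  have hze : z = ∑ i, (c i * q) * (b i : ℤ) := by
    rw [hq, ← hc, Finset.sum_mul]
    exact Finset.sum_congr rfl fun i _ => by ring
  set y : Fin (n + 1) → ℤ := fun i => (c i * q) % (b 0 : ℤ) with hy
  have hy0 : ∀ i, 0 ≤ y i := fun i => Int.emod_nonneg _ hPpos.ne'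
  have hyP : ∀ i, y i < (b 0 : ℤ) := fun i => Int.emod_lt_of_pos _ hPpos
  have hS0 : 0 ≤ ∑ i, y i * (b i : ℤ) := Finset.sum_nonneg fun i _ =>
    mul_nonneg (hy0 i) (by positivity)
  have hSlt : ∑ i, y i * (b i : ℤ) ≤ (∑ i, (b i : ℤ)) * ((b 0 : ℤ) - 1) := by
    rw [Finset.sum_mul]
    refine Finset.sum_le_sum fun i _ => ?_
    have h1 := hyP i
    have h2 : y i ≤ (b 0 : ℤ) - 1 := by omega
    calc y i * (b i : ℤ) ≤ ((b 0 : ℤ) - 1) * (b i : ℤ) :=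
          mul_le_mul_of_nonneg_right h2 (by positivity)
      _ = (b i : ℤ) * ((b 0 : ℤ) - 1) := by ring
  have hSz : ∑ i, y i * (b i : ℤ) ≤ z := by
    have hsb : (0 : ℤ) ≤ ∑ i, (b i : ℤ) := Finset.sum_nonneg fun i _ => by positivity
    nlinarith
  have hdvdPS : (b 0 : ℤ) ∣ z - ∑ i, y i * (b i : ℤ) := by
    have heq : z - ∑ i, y i * (b i : ℤ) = ∑ i, ((c i * q) - y i) * (b i : ℤ) := by
      rw [hze, ← Finset.sum_sub_distrib]
      exact Finset.sum_congr rfl fun i _ => by ring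
    rw [heq]
    refine Finset.dvd_sum fun i _ => Dvd.dvd.mul_right ?_ _
    exact Int.dvd_self_sub_of_emod_eq rfl
  obtain ⟨T, hT⟩ := hdvdPS
  have hT0 : 0 ≤ T := by nlinarith
  refine ⟨fun i => (y i).toNat + (if i = 0 then T.toNat else 0), ?_⟩
  have hcast : ∀ i : Fin (n + 1), ((y i).toNat : ℤ) = y i := fun i => Int.toNat_of_nonneg (hy0 i)
  have hTc : (T.toNat : ℤ) = T := Int.toNat_of_nonneg hT0
  push_cast
  have hterm : ∀ i : Fin (n + 1),
      (((y i).toNat : ℤ) + (if i = 0 then (T.toNat : ℤ) else 0)) * (b i : ℤ)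
      = y i * (b i : ℤ) + (if i = 0 then T * (b i : ℤ) else 0) := by
    intro i
    rw [hcast, add_mul]
    congr 1
    split_ifs with hi
    · rw [hTc]
    · simp
  rw [Finset.sum_congr rfl fun i _ => hterm i, Finset.sum_add_distrib,
    Finset.sum_ite_eq' Finset.univ (0 : Fin (n + 1)) (fun i => T * (b i : ℤ))]
  simp only [Finset.mem_univ, if_true]
  have hcm := mul_comm T ((b 0 : ℕ) : ℤ)
  linarith

/-- **Corollary (multiplying a tail of the weights).**
If `b` is obtained from `a₀,…,aₙ` by multiplying `a_{k+1},…,aₙ` by `m` (for some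
`0 ≤ k < n`), and `gcd(a₀,…,a_k, m·a_{k+1},…,m·aₙ) = gcd(a₀,…,aₙ)`, then
`F^h(a₀,…,a_k, m·a_{k+1},…,m·aₙ) ≥ F^h(a₀,…,aₙ)` for every positive integer `h`. -/
theorem frobenius_mono_of_mul (n k m : ℕ) (hk : k < n) (hm : 0 < m)
    (a : Fin (n + 1) → ℕ) (ha : ∀ i, 0 < a i)
    (b : Fin (n + 1) → ℕ) (hb : ∀ i, b i = if (i : ℕ) ≤ k then a i else m * a i)
    (hgcd : Finset.univ.gcd b = Finset.univ.gcd a)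
    (h : ℕ) (hh : 0 < h) :
    frobNum h b ≥ frobNum h a := by
  classical
  have hb' : ∀ i, 0 < b i := by
    intro i; rw [hb i]; split_ifs
    · exact ha i
    · exact Nat.mul_pos hm (ha i)
  set L : ℕ := Nat.lcm (Finset.univ.gcd a) h with hL
  have hLb : Nat.lcm (Finset.univ.gcd b) h = L := by rw [hgcd]
  have hgpos : 0 < Finset.univ.gcd a := by
    rcases Nat.eq_zero_or_pos (Finset.univ.gcd a) with h0 | h0
    · exfalso
      have := (Finset.gcd_eq_zero_iff.mp h0) 0 (Finset.mem_univ _)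
      exact (ha 0).ne' this
    · exact h0
  have hLpos : 0 < L := Nat.pos_of_ne_zero (Nat.lcm_ne_zero hgpos.ne' hh.ne')
  set Sa : Set ℤ := {z : ℤ | ((Nat.lcm (Finset.univ.gcd a) h : ℕ) : ℤ) ∣ z ∧
    ¬ ∃ x : Fin (n + 1) → ℕ, ((∑ i, x i * a i : ℕ) : ℤ) = z} with hSa
  set Sb : Set ℤ := {z : ℤ | ((Nat.lcm (Finset.univ.gcd b) h : ℕ) : ℤ) ∣ z ∧
    ¬ ∃ x : Fin (n + 1) → ℕ, ((∑ i, x i * b i : ℕ) : ℤ) = z} with hSb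
  have hsub : Sa ⊆ Sb := by
    rintro z ⟨hzdvd, hznrep⟩
    refine ⟨by rw [hgcd]; exact hzdvd, ?_⟩
    rintro ⟨x, hx⟩
    apply hznrep
    refine ⟨fun i => if (i : ℕ) ≤ k then x i else x i * m, ?_⟩
    rw [← hx]
    congr 1
    refine Finset.sum_congr rfl fun i _ => ?_
    simp only [hb i]
    split_ifs with hi
    · rfl
    · ring
  have hne : Sa.Nonempty := by
    refine ⟨-(L : ℤ), dvd_neg.mpr dvd_rfl, ?_⟩
    rintro ⟨x, hx⟩
    have h1 : (0 : ℤ) ≤ ((∑ i, x i * a i : ℕ) : ℤ) := Int.natCast_nonneg _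
    have h2 : -(L : ℤ) < 0 := by
      have : (0 : ℤ) < (L : ℤ) := by exact_mod_cast hLpos
      linarith
    omega
  obtain ⟨N, hN⟩ := rep_large_s6 b hb'
  have hbdd : BddAbove Sb := by
    refine ⟨N, fun z hz => ?_⟩
    by_contra hzN
    push_neg at hzN
    obtain ⟨hzdvd, hznrep⟩ := hz
    have hgdvd : ((Finset.univ.gcd b : ℕ) : ℤ) ∣ z :=
      dvd_trans (by exact_mod_cast Nat.dvd_lcm_left (Finset.univ.gcd b) h) hzdvd
    exact hznrep (hN z hzN.le hgdvd)
  exact csSup_le_csSup hbdd hne hsub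
end

section
/- Let (d;a) = (d_1,…,d_c; a_0,…,a_n) be a regular pair with c ≤ n, let g := gcd(d_1,…,d_c) > 1, and let p be a prime dividing g. Suppose p divides a_0,…,a_k and p does not divide a_{k+1},…,a_n (for some 0 ≤ k ≤ n). If δ(d^p;a^p) ≥ F(a_0/p,…,a_k/p, a_{k+1},…,a_n), then δ(d;a) ≥ F(a_0,…,a_n). -/
open Finset

section AuxFrobenius

lemma exists_rep_bound {κ : Type*} (A : Finset κ) (a : κ → ℕ) (hA : A.Nonempty) :
    (∀ i ∈ A, 0 < a i) →
    ∃ Z : ℤ, ∀ z : ℤ, Z ≤ z → ((A.gcd a : ℕ) : ℤ) ∣ z →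
      ∃ x : κ → ℕ, ((∑ i ∈ A, x i * a i : ℕ) : ℤ) = z := by
  classical
  induction hA using Finset.Nonempty.cons_induction with
  | singleton j =>
    intro ha
    refine ⟨0, fun z hz hdvd => ?_⟩
    simp only [Finset.gcd_singleton, normalize_eq] at hdvd
    refine ⟨fun _ => (z / (a j : ℤ)).toNat, ?_⟩
    have hq : 0 ≤ z / (a j : ℤ) := Int.ediv_nonneg hz (by positivity)
    have haj : (0:ℤ) < a j := by exact_mod_cast ha j (mem_singleton_self j)
    push_cast [Int.toNat_of_nonneg hq]
    rw [Finset.sum_singleton]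
    exact Int.ediv_mul_cancel hdvd
  | cons j B hjB hB ih =>
    intro ha
    obtain ⟨Z, hZ⟩ := ih (fun i hi => ha i (mem_cons_of_mem hi))
    set gB : ℕ := B.gcd a with hgB
    have hgBpos : 0 < gB := by
      obtain ⟨i, hi⟩ := hB
      rcases Nat.eq_zero_or_pos gB with h0 | h
      · exact absurd ((Finset.gcd_eq_zero_iff.mp h0) i hi) (ha i (mem_cons_of_mem hi)).ne'
      · exact h
    refine ⟨Z + (gB : ℤ) * a j, fun z hz hdvd => ?_⟩
    have hgcd : (Finset.cons j B hjB).gcd a = Nat.gcd (a j) gB := by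
      rw [Finset.cons_eq_insert, Finset.gcd_insert]; rfl
    rw [hgcd] at hdvd
    set g : ℕ := Nat.gcd (a j) gB with hg
    -- Bezout: find s with gB ∣ z - s * a j
    obtain ⟨q, hq⟩ := hdvd
    have hbez : (g : ℤ) = a j * Nat.gcdA (a j) gB + gB * Nat.gcdB (a j) gB :=
      Nat.gcd_eq_gcd_ab (a j) gB
    set s : ℤ := Nat.gcdA (a j) gB * q with hs
    have hdvds : (gB : ℤ) ∣ z - s * a j := by
      refine ⟨Nat.gcdB (a j) gB * q, ?_⟩
      rw [hq, hbez]; ring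
    set t : ℤ := s % (gB : ℤ) with ht
    have hgBZ : (0:ℤ) < gB := by exact_mod_cast hgBpos
    have ht0 : 0 ≤ t := Int.emod_nonneg s hgBZ.ne'
    have htlt : t < gB := Int.emod_lt_of_pos s hgBZ
    have hdvdt : (gB : ℤ) ∣ z - t * a j := by
      have h1 : (gB : ℤ) ∣ s - t := by
        refine ⟨s / gB, ?_⟩
        rw [ht, Int.emod_def]; ring
      have : z - t * a j = (z - s * a j) + (s - t) * a j := by ring
      rw [this]
      exact dvd_add hdvds (h1.mul_right _)
    set w : ℤ := z - t * a j with hw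
    have hwZ : Z ≤ w := by
      have : t * a j ≤ gB * a j := by
        have : (0:ℤ) ≤ a j := by positivity
        nlinarith
      simp only [hw]; linarith
    obtain ⟨xB, hxB⟩ := hZ w hwZ hdvdt
    refine ⟨fun i => if i = j then t.toNat else xB i, ?_⟩
    rw [Finset.sum_cons]
    push_cast
    rw [if_pos rfl]
    have hrest : ∑ i ∈ B, (if i = j then (t.toNat : ℤ) else (xB i : ℤ)) * a i
        = ∑ i ∈ B, (xB i : ℤ) * a i := by
      refine Finset.sum_congr rfl fun i hi => ?_
      rw [if_neg (by rintro rfl; exact hjB hi)]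
    rw [hrest]
    have hxB' : ∑ i ∈ B, (xB i : ℤ) * a i = w := by push_cast at hxB; exact hxB
    rw [hxB', Int.toNat_of_nonneg ht0, hw]
    ring

variable {κ : Type*} (A : Finset κ) (a : κ → ℕ)

lemma frob_set_eq :
    {z : ℤ | ((Nat.lcm (A.gcd a) 1 : ℕ) : ℤ) ∣ z ∧
      ¬ ∃ x : κ → ℕ, ((∑ i ∈ A, x i * a i : ℕ) : ℤ) = z}
    = {z : ℤ | ((A.gcd a : ℕ) : ℤ) ∣ z ∧
      ¬ ∃ x : κ → ℕ, ((∑ i ∈ A, x i * a i : ℕ) : ℤ) = z} := by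
  simp [Nat.lcm_one_right]

variable (hA : A.Nonempty) (ha : ∀ i ∈ A, 0 < a i)
include hA ha

lemma gcd_pos_of_pos : 0 < A.gcd a := by
  obtain ⟨i, hi⟩ := hA
  rcases Nat.eq_zero_or_pos (A.gcd a) with h0 | h
  · exact absurd ((Finset.gcd_eq_zero_iff.mp h0) i hi) (ha i hi).ne'
  · exact h

lemma frob_set_nonempty :
    {z : ℤ | ((A.gcd a : ℕ) : ℤ) ∣ z ∧
      ¬ ∃ x : κ → ℕ, ((∑ i ∈ A, x i * a i : ℕ) : ℤ) = z}.Nonempty := by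
  refine ⟨-((A.gcd a : ℕ) : ℤ), dvd_neg.mpr dvd_rfl, ?_⟩
  rintro ⟨x, hx⟩
  have h1 : (0:ℤ) ≤ ((∑ i ∈ A, x i * a i : ℕ) : ℤ) := by positivity
  have h2 : (0:ℤ) < ((A.gcd a : ℕ) : ℤ) := by exact_mod_cast gcd_pos_of_pos A a hA ha
  omega

lemma frob_set_bddAbove :
    BddAbove {z : ℤ | ((A.gcd a : ℕ) : ℤ) ∣ z ∧
      ¬ ∃ x : κ → ℕ, ((∑ i ∈ A, x i * a i : ℕ) : ℤ) = z} := by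
  obtain ⟨Z, hZ⟩ := exists_rep_bound A a hA ha
  refine ⟨Z, fun z hz => ?_⟩
  by_contra h
  exact hz.2 (hZ z (le_of_not_ge h) hz.1)

lemma frobOn_le_of (δ' : ℤ)
    (h : ∀ z : ℤ, ((A.gcd a : ℕ) : ℤ) ∣ z →
      (¬ ∃ x : κ → ℕ, ((∑ i ∈ A, x i * a i : ℕ) : ℤ) = z) → z ≤ δ') :
    frobOn 1 A a ≤ δ' := by
  rw [frobOn, frob_set_eq]
  exact csSup_le (frob_set_nonempty A a hA ha) (fun z hz => h z hz.1 hz.2)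

lemma rep_of_frobOn_lt (z : ℤ) (hdvd : ((A.gcd a : ℕ) : ℤ) ∣ z)
    (hz : frobOn 1 A a < z) :
    ∃ x : κ → ℕ, ((∑ i ∈ A, x i * a i : ℕ) : ℤ) = z := by
  by_contra h
  have hmem : z ∈ {w : ℤ | ((A.gcd a : ℕ) : ℤ) ∣ w ∧
      ¬ ∃ x : κ → ℕ, ((∑ i ∈ A, x i * a i : ℕ) : ℤ) = w} := ⟨hdvd, h⟩
  have := le_csSup (frob_set_bddAbove A a hA ha) hmem
  rw [frobOn, frob_set_eq] at hz
  exact absurd this (not_le.mpr hz)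

end AuxFrobenius

/-- **Lemma (reduction of a common prime factor of the degrees).**
Let `(d;a)` be a regular pair with `c ≤ n`, let `g := gcd(d₁,…,d_c) > 1` and let `p` be
a prime dividing `g`; assume `p ∣ a₀,…,a_k` and `p ∤ a_{k+1},…,aₙ`.  If the pair
`(dᵖ;aᵖ)`, obtained by dividing every degree and weight divisible by `p` by `p`,
satisfies `δ(dᵖ;aᵖ) ≥ F(aᵖ)`, then `δ(d;a) ≥ F(a₀,…,aₙ)`. -/
theorem delta_ge_frobenius_of_prime_reduction (c n : ℕ) (hc : 1 ≤ c) (hcn : c ≤ n)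
    (d : Fin c → ℕ) (a : Fin (n + 1) → ℕ)
    (hd : ∀ j, 0 < d j) (ha : ∀ i, 0 < a i)
    (hreg : IsHRegularPair 1 d a)
    (hg : 1 < Finset.univ.gcd d)
    (p : ℕ) (hp : p.Prime) (hpg : p ∣ Finset.univ.gcd d)
    (k : ℕ) (hk : k ≤ n)
    (hdiv : ∀ i : Fin (n + 1), (i : ℕ) ≤ k → p ∣ a i)
    (hndiv : ∀ i : Fin (n + 1), k < (i : ℕ) → ¬ p ∣ a i)
    (hyp : deltaPair (fun j => if p ∣ d j then d j / p else d j)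
        (fun i => if p ∣ a i then a i / p else a i)
      ≥ frobNum 1 (fun i => if p ∣ a i then a i / p else a i)) :
    deltaPair d a ≥ frobNum 1 a := by
  classical
  haveI : Fact p.Prime := ⟨hp⟩
  haveI : NeZero p := ⟨hp.ne_zero⟩
  set aa : Fin (n + 1) → ℕ := fun i => if p ∣ a i then a i / p else a i with haadef
  set d' : Fin c → ℕ := fun j => if p ∣ d j then d j / p else d j with hd'def
  have hp2 : 2 ≤ p := hp.two_le
  have hpd : ∀ j, p ∣ d j := fun j => hpg.trans (Finset.gcd_dvd (mem_univ j))
  -- there is a weight not divisible by p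
  obtain ⟨i₀, hi₀⟩ : ∃ i₀ : Fin (n + 1), ¬ p ∣ a i₀ := by
    by_contra h
    push_neg at h
    have hdvdg : p ∣ univ.gcd a := Finset.dvd_gcd fun i _ => h i
    have hgpos : 0 < univ.gcd a := gcd_pos_of_pos univ a univ_nonempty (fun i _ => ha i)
    have h1 : 1 < univ.gcd a := lt_of_lt_of_le hp.one_lt (Nat.le_of_dvd hgpos hdvdg)
    rcases hreg univ subset_rfl univ_nonempty h1 with ⟨P, _, hPcard, _⟩ | hdvd1
    · have h2 : P.card ≤ c := by
        simpa using Finset.card_le_card (Finset.subset_univ P)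
      rw [hPcard] at h2
      simp [Finset.card_univ] at h2
      omega
    · exact absurd (Nat.dvd_one.mp hdvd1) (by omega)
  -- positivity of reduced weights
  have haapos : ∀ i ∈ (univ : Finset (Fin (n + 1))), 0 < aa i := by
    intro i _
    by_cases h : p ∣ a i
    · simp only [haadef, if_pos h]
      exact Nat.div_pos (Nat.le_of_dvd (ha i) h) hp.pos
    · simpa only [haadef, if_neg h] using ha i
  have haai₀ : aa i₀ = a i₀ := by simp only [haadef, if_neg hi₀]
  -- gcd facts
  set g₁ : ℕ := univ.gcd aa with hg₁def
  have hg₁a : ∀ i, g₁ ∣ a i := by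
    intro i
    have h1 : g₁ ∣ aa i := Finset.gcd_dvd (mem_univ i)
    by_cases h : p ∣ a i
    · simp only [haadef, if_pos h] at h1
      exact h1.trans (Nat.div_dvd_of_dvd h)
    · simpa only [haadef, if_neg h] using h1
  have hg₁g : g₁ ∣ univ.gcd a := Finset.dvd_gcd fun i _ => hg₁a i
  have hpg₁ : ¬ p ∣ g₁ := by
    intro h
    exact hi₀ (h.trans (by rw [← haai₀]; exact Finset.gcd_dvd (mem_univ i₀)))
  -- delta identity
  have hdsum : ∀ j, (d j : ℤ) = p * (d' j : ℤ) := by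
    intro j
    simp only [hd'def, if_pos (hpd j)]
    exact_mod_cast (Nat.mul_div_cancel' (hpd j)).symm
  have hkey : deltaPair d a = p * deltaPair d' aa + ∑ i : Fin (n + 1), ((p : ℤ) * aa i - a i) := by
    unfold deltaPair deltaOn
    have h1 : ∑ j : Fin c, (d j : ℤ) = p * ∑ j : Fin c, (d' j : ℤ) := by
      rw [Finset.mul_sum]; exact Finset.sum_congr rfl fun j _ => hdsum j
    have h2 : ∑ i : Fin (n + 1), ((p : ℤ) * aa i - a i)
        = p * ∑ i : Fin (n + 1), (aa i : ℤ) - ∑ i : Fin (n + 1), (a i : ℤ) := by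
      rw [Finset.sum_sub_distrib, Finset.mul_sum]
    rw [h1, h2]
    ring
  have hterm0 : ∀ i ∈ (univ : Finset (Fin (n + 1))), (0 : ℤ) ≤ (p : ℤ) * aa i - a i := by
    intro i _
    by_cases h : p ∣ a i
    · have : (p : ℤ) * aa i = a i := by
        simp only [haadef, if_pos h]
        exact_mod_cast Nat.mul_div_cancel' h
      omega
    · simp only [haadef, if_neg h]
      have hai : (1 : ℤ) ≤ a i := by exact_mod_cast ha i
      nlinarith [hp2]
  have hsum_ge : ((p : ℤ) - 1) * a i₀ ≤ ∑ i : Fin (n + 1), ((p : ℤ) * aa i - a i) := by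
    have h1 := Finset.single_le_sum hterm0 (mem_univ i₀)
    rw [haai₀] at h1
    have : ((p : ℤ) - 1) * a i₀ = (p : ℤ) * a i₀ - a i₀ := by ring
    rw [this]
    exact h1
  -- main argument
  rw [ge_iff_le, frobNum]
  apply frobOn_le_of univ a univ_nonempty (fun i _ => ha i)
  intro z hzdvd hznrep
  by_contra hzgt
  push_neg at hzgt
  apply hznrep
  -- residue choice
  set α : ZMod p := (z : ZMod p) * ((a i₀ : ℕ) : ZMod p)⁻¹ with hα
  set t : ℕ := α.val with htdef
  have htlt : t < p := ZMod.val_lt α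
  have ha₀ne : ((a i₀ : ℕ) : ZMod p) ≠ 0 := by
    intro h
    exact hi₀ ((ZMod.natCast_eq_zero_iff _ p).mp h)
  have hptz : (p : ℤ) ∣ z - t * a i₀ := by
    have h0 : ((z - t * a i₀ : ℤ) : ZMod p) = 0 := by
      push_cast
      rw [show ((t : ℕ) : ZMod p) = α from ZMod.natCast_rightInverse α, hα,
        mul_assoc, inv_mul_cancel₀ ha₀ne, mul_one]
      ring
    exact (ZMod.intCast_zmod_eq_zero_iff_dvd _ p).mp h0
  have hg₁z : ((g₁ : ℕ) : ℤ) ∣ z - t * a i₀ := by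
    have h1 : ((g₁ : ℕ) : ℤ) ∣ z := (Int.natCast_dvd_natCast.mpr hg₁g).trans hzdvd
    have h2 : ((g₁ : ℕ) : ℤ) ∣ (t : ℤ) * a i₀ :=
      Dvd.dvd.mul_left (Int.natCast_dvd_natCast.mpr (hg₁a i₀)) _
    exact dvd_sub h1 h2
  have hcop : IsCoprime (p : ℤ) ((g₁ : ℕ) : ℤ) := by
    rw [Int.isCoprime_iff_gcd_eq_one]
    simpa using (Nat.Prime.coprime_iff_not_dvd hp).mpr hpg₁
  obtain ⟨w, hw⟩ := hptz
  have hg₁w : ((g₁ : ℕ) : ℤ) ∣ w := by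
    have h1 : (p : ℤ) * g₁ ∣ (p : ℤ) * w := by
      rw [← hw]
      exact hcop.mul_dvd ⟨w, hw⟩ hg₁z
    have hpne : (p : ℤ) ≠ 0 := by exact_mod_cast hp.ne_zero
    exact (mul_dvd_mul_iff_left hpne).mp h1
  -- w is large
  have hwgt : frobOn 1 univ aa < w := by
    have hdt : frobOn 1 univ aa ≤ deltaPair d' aa := hyp
    have hta : (t : ℤ) * a i₀ ≤ ((p : ℤ) - 1) * a i₀ := by
      have h1 : (t : ℤ) ≤ (p : ℤ) - 1 := by omega
      have h2 : (0 : ℤ) ≤ a i₀ := by positivity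
      exact mul_le_mul_of_nonneg_right h1 h2
    have h3 : (p : ℤ) * deltaPair d' aa < (p : ℤ) * w := by
      have : (p : ℤ) * w = z - t * a i₀ := hw.symm
      rw [this]
      have := hsum_ge
      linarith [hkey]
    have hppos : (0 : ℤ) < p := by exact_mod_cast hp.pos
    have h4 : deltaPair d' aa < w := lt_of_mul_lt_mul_left h3 hppos.le
    linarith
  obtain ⟨y, hy⟩ := rep_of_frobOn_lt univ aa univ_nonempty haapos w hg₁w hwgt
  -- build the representation of z
  refine ⟨fun i => (if i = i₀ then t else 0) + y i * (if p ∣ a i then 1 else p), ?_⟩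
  have h2 : ∀ i ∈ (univ : Finset (Fin (n + 1))),
      ((if i = i₀ then t else 0) + y i * (if p ∣ a i then 1 else p)) * a i
      = (if i = i₀ then t * a i else 0) + p * (y i * aa i) := by
    intro i _
    by_cases h : p ∣ a i
    · have hne : i ≠ i₀ := by rintro rfl; exact hi₀ h
      simp only [if_neg hne, if_pos h, haadef]
      rw [show p * (y i * (a i / p)) = y i * (a i / p * p) by ring, Nat.div_mul_cancel h]
      ring
    · simp only [if_neg h, haadef]
      by_cases h' : i = i₀
      · simp only [if_pos h']
        ring
      · simp only [if_neg h']
        ring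
  have hnat : (∑ i : Fin (n + 1),
      ((if i = i₀ then t else 0) + y i * (if p ∣ a i then 1 else p)) * a i)
      = t * a i₀ + p * ∑ i : Fin (n + 1), y i * aa i := by
    rw [Finset.sum_congr rfl h2, Finset.sum_add_distrib,
      Finset.sum_ite_eq' univ i₀ (fun i => t * a i), if_pos (mem_univ i₀), ← Finset.mul_sum]
  rw [hnat]
  push_cast
  push_cast at hy
  rw [hy]
  linarith [hw]
end

section
/- Suppose that for every regular pair (d*;a*) = (d_1*,…,d_c*; a_0*,…,a_n*) with c ≤ n, all weights a_i* ≠ 1, and gcd(d_1*,…,d_c*) = 1, one has δ(d*;a*) ≥ F(a_0*,…,a_n*). Then for every regular pair (d;a) = (d_1,…,d_c; a_0,…,a_n) with c ≤ n and all weights a_i ≠ 1 (in particular also those with gcd(d_1,…,d_c) > 1), one has δ(d;a) ≥ F(a_0,…,a_n). -/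
open Finset

section Aux

lemma finset_bezout {κ : Type*} [DecidableEq κ] (s : Finset κ) (a : κ → ℕ) :
    ∃ f : κ → ℤ, ∑ i ∈ s, f i * (a i : ℤ) = ((s.gcd a : ℕ) : ℤ) := by
  classical
  induction s using Finset.induction_on with
  | empty => exact ⟨0, by simp⟩
  | @insert i s hi ih =>
    obtain ⟨f, hf⟩ := ih
    refine ⟨fun j => if j = i then Nat.gcdA (a i) (s.gcd a)
      else Nat.gcdB (a i) (s.gcd a) * f j, ?_⟩
    rw [Finset.sum_insert hi, Finset.gcd_insert]
    have h1 : ∀ j ∈ s, (if j = i then Nat.gcdA (a i) (s.gcd a)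
        else Nat.gcdB (a i) (s.gcd a) * f j) * (a j : ℤ)
        = Nat.gcdB (a i) (s.gcd a) * (f j * a j) := by
      intro j hj
      rw [if_neg (by rintro rfl; exact hi hj), mul_assoc]
    rw [Finset.sum_congr rfl h1, ← Finset.mul_sum, hf]
    have h2 : GCDMonoid.gcd (a i) (s.gcd a) = Nat.gcd (a i) (s.gcd a) := rfl
    simp only [h2, Nat.gcd_eq_gcd_ab]
    rw [if_pos trivial]; ring

lemma reg_cons {c n : ℕ} (d : Fin c → ℕ) (a : Fin (n + 1) → ℕ) (w : ℕ)
    (ha : ∀ i, 0 < a i) (hreg : IsHRegularPair 1 d a) :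
    IsHRegularPair 1 (Fin.cons w d) (Fin.cons w a) := by
  classical
  intro I _ hne hgI
  set e : Fin (n + 1) ↪ Fin (n + 2) := ⟨Fin.succ, Fin.succ_injective _⟩ with he
  set J : Finset (Fin (n + 1)) := Finset.univ.filter (fun i => i.succ ∈ I) with hJ
  have hmap : J.map e = I.erase 0 := by
    ext x
    simp only [Finset.mem_map, Finset.mem_erase, hJ, Finset.mem_filter, Finset.mem_univ,
      true_and, he, Function.Embedding.coeFn_mk]
    constructor
    · rintro ⟨i, hi, rfl⟩; exact ⟨Fin.succ_ne_zero i, hi⟩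
    · rintro ⟨hx0, hx⟩
      obtain ⟨i, rfl⟩ := Fin.exists_succ_eq_of_ne_zero hx0
      exact ⟨i, hx, rfl⟩
  have hgJ : (J.map e).gcd (Fin.cons w a) = J.gcd a := by
    rw [Finset.map_eq_image, Finset.gcd_image]
    exact Finset.gcd_congr rfl (fun i _ => by simp [he])
  by_cases h0 : (0 : Fin (n + 2)) ∈ I
  · have hIe : I = insert 0 (J.map e) := by rw [hmap, Finset.insert_erase h0]
    have hgw : I.gcd (Fin.cons w a) ∣ w := by
      have := Finset.gcd_dvd (f := Fin.cons w a) h0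
      simpa using this
    by_cases hJne : J.Nonempty
    · have hdvdJ : I.gcd (Fin.cons w a) ∣ J.gcd a := by
        refine Finset.dvd_gcd fun i hi => ?_
        have hmem : i.succ ∈ I := by
          rw [hJ] at hi; simpa using hi
        have := Finset.gcd_dvd (f := Fin.cons w a) hmem
        simpa using this
      have hJpos : 0 < J.gcd a := Nat.pos_of_ne_zero (fun h => by
        obtain ⟨i, hi⟩ := hJne
        exact (ha i).ne' (Finset.gcd_eq_zero_iff.1 h i hi))
      have hgJ1 : 1 < J.gcd a := lt_of_lt_of_le hgI (Nat.le_of_dvd hJpos hdvdJ)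
      rcases hreg J (Finset.subset_univ _) hJne hgJ1 with ⟨P, _, hPcard, hPdvd⟩ | hdvd1
      · left
        refine ⟨insert 0 (P.map ⟨Fin.succ, Fin.succ_injective _⟩), Finset.subset_univ _, ?_, ?_⟩
        · rw [Finset.card_insert_of_notMem (by simp [Fin.succ_ne_zero]),
            Finset.card_map, hPcard, hIe,
            Finset.card_insert_of_notMem (by simp [hmap, Fin.succ_ne_zero]),
            Finset.card_map]
        · intro j hj
          rcases Finset.mem_insert.1 hj with rfl | hj
          · simpa using hgw
          · obtain ⟨p, hp, rfl⟩ := Finset.mem_map.1 hj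
            simpa using hdvdJ.trans (hPdvd p hp)
      · exact absurd (Nat.le_of_dvd one_pos (hdvdJ.trans hdvd1)) (by omega)
    · have hJ0 : J = ∅ := Finset.not_nonempty_iff_eq_empty.1 hJne
      have hI0 : I = {0} := by rw [hIe, hJ0]; simp
      left
      refine ⟨{0}, Finset.subset_univ _, by simp [hI0], ?_⟩
      intro j hj
      rcases Finset.mem_singleton.1 hj with rfl
      simpa using hgw
  · have hIe : I = J.map e := by rw [hmap, Finset.erase_eq_of_notMem h0]
    have hJne : J.Nonempty := by
      rw [hIe] at hne; exact Finset.map_nonempty.1 hne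
    rw [hIe, hgJ] at hgI ⊢
    rcases hreg J (Finset.subset_univ _) hJne hgI with ⟨P, _, hPcard, hPdvd⟩ | hdvd1
    · left
      refine ⟨P.map ⟨Fin.succ, Fin.succ_injective _⟩, Finset.subset_univ _, ?_, ?_⟩
      · rw [Finset.card_map, hPcard, Finset.card_map]
      · intro j hj
        obtain ⟨p, hp, rfl⟩ := Finset.mem_map.1 hj
        simpa using hPdvd p hp
    · exact Or.inr hdvd1

lemma delta_cons {c n : ℕ} (d : Fin c → ℕ) (a : Fin (n + 1) → ℕ) (w : ℕ) :
    deltaPair (Fin.cons w d : Fin (c + 1) → ℕ) (Fin.cons w a : Fin (n + 2) → ℕ)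
      = deltaPair d a := by
  simp [deltaPair, deltaOn, Fin.sum_univ_succ]

lemma gcd_cons_eq_one {m : ℕ} (b : Fin m → ℕ) (w : ℕ)
    (h : Nat.Coprime w (Finset.univ.gcd b)) :
    (Finset.univ.gcd (Fin.cons w b : Fin (m + 1) → ℕ)) = 1 := by
  set g := Finset.univ.gcd (Fin.cons w b : Fin (m + 1) → ℕ) with hg
  have h1 : g ∣ w := by
    have := Finset.gcd_dvd (f := Fin.cons w b) (Finset.mem_univ (0 : Fin (m + 1)))
    simpa using this
  have h2 : g ∣ Finset.univ.gcd b := by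
    refine Finset.dvd_gcd fun i _ => ?_
    have := Finset.gcd_dvd (f := Fin.cons w b) (Finset.mem_univ i.succ)
    simpa using this
  exact Nat.eq_one_of_dvd_coprimes h h1 h2

lemma frob_cons {n : ℕ} (a : Fin (n + 1) → ℕ) (w : ℕ) (y : Fin (n + 1) → ℕ)
    (hga : Finset.univ.gcd a = 1)
    (hyw : ∑ i, y i * a i = w) :
    frobNum 1 (Fin.cons w a : Fin (n + 2) → ℕ) = frobNum 1 a := by
  have hga' : Finset.univ.gcd (Fin.cons w a : Fin (n + 2) → ℕ) = 1 := by
    apply gcd_cons_eq_one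
    rw [hga]; exact Nat.coprime_one_right w
  unfold frobNum frobOn
  congr 1
  ext z
  simp only [Set.mem_setOf_eq, hga, hga', Nat.lcm_self, Nat.cast_one, one_dvd, true_and]
  constructor
  · rintro hrep ⟨x, hx⟩
    exact hrep ⟨Fin.cons 0 x, by rw [← hx]; congr 1; simp [Fin.sum_univ_succ]⟩
  · rintro hrep ⟨x, hx⟩
    refine hrep ⟨fun i => x i.succ + x 0 * y i, ?_⟩
    rw [← hx]
    congr 1
    have hR : ∑ i : Fin (n + 2), x i * (Fin.cons w a : Fin (n + 2) → ℕ) i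
        = x 0 * w + ∑ i : Fin (n + 1), x i.succ * a i := by
      rw [Fin.sum_univ_succ]; simp
    have hL : ∑ i : Fin (n + 1), (x i.succ + x 0 * y i) * a i
        = (∑ i : Fin (n + 1), x i.succ * a i) + x 0 * w := by
      simp only [add_mul, Finset.sum_add_distrib, mul_assoc, ← Finset.mul_sum, hyw]
    rw [hL, hR]
    ring

end Aux

/-- **Proposition (reduction to degrees with no common factor).**
If the inequality `δ(d*;a*) ≥ F(a*)` of Conjecture 4.8 holds for every regular pair
`(d*;a*)` with `c ≤ n`, all weights `≠ 1`, and `gcd(d₁*,…,d_c*) = 1`, then it holds for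
every regular pair `(d;a)` with `c ≤ n` and all weights `≠ 1` (in particular also for
those with `gcd(d₁,…,d_c) > 1`). -/
theorem conjecture_reduction_to_coprime_degrees
    (H : ∀ (c n : ℕ), 1 ≤ c → c ≤ n → ∀ (d : Fin c → ℕ) (a : Fin (n + 1) → ℕ),
      (∀ j, 0 < d j) → (∀ i, 0 < a i) → IsHRegularPair 1 d a → (∀ i, a i ≠ 1) →
      Finset.univ.gcd d = 1 → deltaPair d a ≥ frobNum 1 a) :
    ∀ (c n : ℕ), 1 ≤ c → c ≤ n → ∀ (d : Fin c → ℕ) (a : Fin (n + 1) → ℕ),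
      (∀ j, 0 < d j) → (∀ i, 0 < a i) → IsHRegularPair 1 d a → (∀ i, a i ≠ 1) →
      deltaPair d a ≥ frobNum 1 a := by
  intro c n hc hcn d a hd ha hreg ha1
  classical
  -- the gcd of the weights of a regular pair with `c ≤ n` and all weights `≠ 1` is `1`
  have hga : Finset.univ.gcd a = 1 := by
    by_contra hne
    have h0 : Finset.univ.gcd a ∣ a 0 := Finset.gcd_dvd (Finset.mem_univ 0)
    have hpos : 0 < Finset.univ.gcd a := Nat.pos_of_ne_zero (fun h => by
      rw [h] at h0; exact (ha 0).ne' (Nat.eq_zero_of_zero_dvd h0))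
    have h1 : 1 < Finset.univ.gcd a := by omega
    rcases hreg Finset.univ (Finset.Subset.refl _) Finset.univ_nonempty h1 with
      ⟨P, _, hPcard, _⟩ | hdvd
    · have hle := Finset.card_le_univ P
      simp [Fintype.card_fin] at hPcard hle
      omega
    · exact hne (Nat.dvd_one.1 hdvd)
  -- Bezout
  obtain ⟨f, hf⟩ := finset_bezout Finset.univ a
  rw [hga] at hf
  norm_num at hf
  set u : ℕ := ∑ i, (f i).toNat * a i with hu
  set v : ℕ := ∑ i, (-(f i)).toNat * a i with hv
  have huv : (u : ℤ) - (v : ℤ) = 1 := by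
    rw [hu, hv]
    push_cast
    rw [← Finset.sum_sub_distrib, ← hf]
    refine Finset.sum_congr rfl fun i _ => ?_
    rw [← sub_mul]
    congr 1
    omega
  have hv1 : 1 ≤ v := by
    by_contra hv0
    have hu1 : u = 1 := by omega
    have hne0 : ∃ i ∈ Finset.univ, (f i).toNat * a i ≠ 0 := by
      apply Finset.exists_ne_zero_of_sum_ne_zero
      rw [← hu, hu1]; omega
    obtain ⟨i, _, hi⟩ := hne0
    have hle : (f i).toNat * a i ≤ u :=
      hu ▸ Finset.single_le_sum (f := fun j => (f j).toNat * a j)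
        (fun j _ => Nat.zero_le _) (Finset.mem_univ i)
    have hone : (f i).toNat * a i = 1 := by omega
    have hai : a i = 1 := by
      rcases Nat.eq_one_of_mul_eq_one_left hone with h
      omega
    exact ha1 i hai
  set G : ℕ := Finset.univ.gcd d with hG
  have hG1 : 1 ≤ G := by
    refine Nat.pos_of_ne_zero fun h => ?_
    have := Finset.gcd_eq_zero_iff.1 (hG ▸ h) ⟨0, hc⟩ (Finset.mem_univ _)
    exact (hd ⟨0, hc⟩).ne' this
  set w : ℕ := G * v + 1 with hw
  have hGv : 1 ≤ G * v := Nat.one_le_iff_ne_zero.2 (by positivity)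
  have hw2 : 2 ≤ w := by omega
  -- `w` is representable
  set y : Fin (n + 1) → ℕ := fun i => (f i).toNat + (G - 1) * (-(f i)).toNat with hy
  have hyw : ∑ i, y i * a i = w := by
    have hsum : ∑ i, y i * a i = u + (G - 1) * v := by
      simp only [hy, hu, hv, add_mul, Finset.sum_add_distrib, Finset.mul_sum, mul_assoc]
    have hmul : (G - 1) * v + v = G * v := by
      have hGe : (G - 1) + 1 = G := by omega
      calc (G - 1) * v + v = ((G - 1) + 1) * v := by ring
        _ = G * v := by rw [hGe]
    rw [hsum, hw]
    omega
  have hcop : Nat.Coprime w G := by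
    rw [hw, add_comm]
    exact (Nat.coprime_add_mul_left_left 1 G v).2 (Nat.coprime_one_left G)
  -- apply the hypothesis to the augmented pair
  have hd' : ∀ j, 0 < (Fin.cons w d : Fin (c + 1) → ℕ) j := by
    intro j
    induction j using Fin.cases with
    | zero => simpa using (by omega : 0 < w)
    | succ i => simpa using hd i
  have ha' : ∀ i, 0 < (Fin.cons w a : Fin (n + 2) → ℕ) i := by
    intro i
    induction i using Fin.cases with
    | zero => simpa using (by omega : 0 < w)
    | succ i => simpa using ha i
  have ha1' : ∀ i, (Fin.cons w a : Fin (n + 2) → ℕ) i ≠ 1 := by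
    intro i
    induction i using Fin.cases with
    | zero => simpa using (by omega : w ≠ 1)
    | succ i => simpa using ha1 i
  have hgd' : Finset.univ.gcd (Fin.cons w d : Fin (c + 1) → ℕ) = 1 :=
    gcd_cons_eq_one d w (hG ▸ hcop)
  have hkey := H (c + 1) (n + 1) (by omega) (by omega) (Fin.cons w d) (Fin.cons w a)
    hd' ha' (reg_cons d a w ha hreg) ha1' hgd'
  rw [delta_cons, frob_cons a w y hga hyw] at hkey
  exact hkey
end

section
/- Let a_0,…,a_n be positive integers with gcd(a_0,…,a_n) = 1, let g := gcd(a_0,…,a_k) for some 0 ≤ k < n, and let G be a positive integer coprime to g. Then F(a_0,…,a_n) ≤ F^g(a_0,…,a_k) + F^G(a_{k+1},…,a_n,g) + gG. -/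
open Finset

/-!
Take `N > F^g(a₀,…,a_k) + F^G(a_{k+1},…,aₙ,g) + gG`. Since `G` and `g` are coprime, some `v` in
the window `(F^G, F^G + gG]` satisfies `v ≡ 0 (mod G)` and `v ≡ N (mod g)`. Then `v` is
represented by `a_{k+1},…,aₙ,g`, say `v = m g + T`, and `N - T = (N - v) + m g` is a multiple of
`g` exceeding `F^g`, hence represented by `a₀,…,a_k`; together `N = (N - T) + T`.
-/

section Representable

variable {κ : Type*}

def Representable (A : Finset κ) (a : κ → ℕ) (z : ℤ) : Prop :=
  ∃ x : κ → ℕ, ((∑ i ∈ A, x i * a i : ℕ) : ℤ) = z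

variable {A B : Finset κ} {a : κ → ℕ}

theorem Representable.nonneg {z : ℤ} (hz : Representable A a z) : 0 ≤ z := by
  obtain ⟨x, rfl⟩ := hz
  positivity

theorem representable_of_mem_closure {m : ℕ} (hm : m ∈ AddSubmonoid.closure (a '' A)) :
    Representable A a m := by
  classical
  induction hm using AddSubmonoid.closure_induction with
  | mem _ hm =>
    obtain ⟨i, hi : i ∈ A, rfl⟩ := hm
    exact ⟨fun j => if j = i then 1 else 0, by simp [hi]⟩
  | zero => exact ⟨0, by simp⟩
  | add _ _ _ _ hm hn =>
    obtain ⟨x, hx⟩ := hm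
    obtain ⟨y, hy⟩ := hn
    exact ⟨x + y, by simp only [Pi.add_apply, add_mul, sum_add_distrib, Nat.cast_add, hx, hy]⟩

theorem exists_forall_le_representable (A : Finset κ) (a : κ → ℕ) :
    ∃ n : ℤ, ∀ z : ℤ, n ≤ z → ((A.gcd a : ℕ) : ℤ) ∣ z → Representable A a z := by
  obtain ⟨n, hn⟩ := Nat.exists_mem_closure_of_ge (a '' A)
  have hgcd : Nat.setGcd (a '' A) ∣ A.gcd a :=
    Finset.dvd_gcd fun i hi => Nat.setGcd_dvd_of_mem ⟨i, hi, rfl⟩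
  refine ⟨n, fun z hz hdvd => ?_⟩
  lift z to ℕ using by omega
  exact representable_of_mem_closure <|
    hn z (by exact_mod_cast hz) (hgcd.trans (Int.natCast_dvd_natCast.mp hdvd))

theorem Representable.union [DecidableEq κ] (hAB : Disjoint A B) {u w : ℤ}
    (hu : Representable A a u) (hw : Representable B a w) : Representable (A ∪ B) a (u + w) := by
  obtain ⟨x, rfl⟩ := hu
  obtain ⟨y, rfl⟩ := hw
  refine ⟨fun i => if i ∈ A then x i else y i, ?_⟩
  rw [sum_union hAB]
  push_cast
  congr 1
  · exact sum_congr rfl fun i hi => by rw [if_pos hi]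
  · exact sum_congr rfl fun i hi => by rw [if_neg (disjoint_right.mp hAB hi)]

theorem Representable.exists_of_insert_none [DecidableEq κ] {c : ℕ} {v : ℤ}
    (hv : Representable (insert none (B.image some)) (fun o => o.elim c a) v) :
    ∃ m : ℕ, Representable B a (v - m * c) := by
  obtain ⟨x, rfl⟩ := hv
  refine ⟨x none, x ∘ some, ?_⟩
  rw [sum_insert (by simp), sum_image fun _ _ _ _ h => Option.some_injective _ h]
  push_cast
  simp

end Representable

section frobOn

variable {κ : Type*} {h : ℕ} {A : Finset κ} {a : κ → ℕ}

theorem representable_of_frobOn_lt {z : ℤ} (hdvd : ((Nat.lcm (A.gcd a) h : ℕ) : ℤ) ∣ z)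
    (hz : frobOn h A a < z) : Representable A a z := by
  obtain ⟨n, hn⟩ := exists_forall_le_representable A a
  have hgcd : ((A.gcd a : ℕ) : ℤ) ∣ ((Nat.lcm (A.gcd a) h : ℕ) : ℤ) :=
    Int.natCast_dvd_natCast.mpr (Nat.dvd_lcm_left _ _)
  have hbdd : BddAbove {w : ℤ | ((Nat.lcm (A.gcd a) h : ℕ) : ℤ) ∣ w ∧ ¬ Representable A a w} :=
    ⟨n, fun w ⟨hw, hrep⟩ => le_of_not_ge fun hnw => hrep (hn w hnw (hgcd.trans hw))⟩
  by_contra hrep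
  exact hz.not_ge (le_csSup hbdd ⟨hdvd, hrep⟩)

theorem frobOn_le_of_forall_lt_representable (hl : Nat.lcm (A.gcd a) h ≠ 0) {X : ℤ}
    (H : ∀ z, ((Nat.lcm (A.gcd a) h : ℕ) : ℤ) ∣ z → X < z → Representable A a z) :
    frobOn h A a ≤ X := by
  refine csSup_le ⟨-(Nat.lcm (A.gcd a) h : ℤ), dvd_neg.mpr dvd_rfl, fun hrep => ?_⟩
    fun z ⟨hdvd, hrep⟩ => le_of_not_gt fun hXz => hrep (H z hdvd hXz)
  have := Representable.nonneg hrep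
  omega

end frobOn

theorem exists_mem_Ioc_dvd_and_dvd_sub {m n : ℤ} (hmn : IsCoprime m n) (hpos : 0 < m * n)
    (N F : ℤ) : ∃ v ∈ Set.Ioc F (F + m * n), m ∣ v ∧ n ∣ N - v := by
  obtain ⟨u, w, huw⟩ := hmn
  have hv := toIocMod_sub_self_eq_mul hpos F (N * u * m)
  refine ⟨_, toIocMod_mem_Ioc hpos F (N * u * m), ⟨N * u - toIocDiv hpos F (N * u * m) * n, ?_⟩,
    ⟨N * w + toIocDiv hpos F (N * u * m) * m, ?_⟩⟩
  · linear_combination hv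
  · linear_combination -hv - N * huw

theorem frobenius_recursive_bound_G_general (n k : ℕ)
    (a : Fin (n + 1) → ℕ) (ha : ∀ i, 0 < a i)
    (hcop : Finset.univ.gcd a = 1)
    (g : ℕ) (hg : g = (Finset.univ.filter (fun i : Fin (n + 1) => (i : ℕ) ≤ k)).gcd a)
    (G : ℕ) (hG : 0 < G) (hGg : Nat.Coprime G g) :
    frobNum 1 a ≤
      frobOn g (Finset.univ.filter (fun i : Fin (n + 1) => (i : ℕ) ≤ k)) a
      + frobOn G
          (insert (none : Option (Fin (n + 1)))
            ((Finset.univ.filter (fun i : Fin (n + 1) => k < (i : ℕ))).image some))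
          (fun o => o.elim g a)
      + (g : ℤ) * G := by
  set A := univ.filter fun i : Fin (n + 1) => (i : ℕ) ≤ k
  set B := univ.filter fun i : Fin (n + 1) => k < (i : ℕ)
  have hAB : Disjoint A B := disjoint_filter.mpr fun i _ hi => by omega
  have hunion : A ∪ B = univ := by
    ext i
    simp only [A, B, mem_union, mem_filter, mem_univ, true_and, iff_true]
    omega
  have hg_pos : 0 < g := hg ▸ Nat.pos_of_dvd_of_pos (gcd_dvd (by simp [A])) (ha 0)
  have hgcd : (insert none (B.image some)).gcd (fun o => o.elim g a) = 1 := by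
    rw [gcd_insert, gcd_image]
    exact hg ▸ (gcd_union (s₁ := A)).symm.trans (hunion ▸ hcop)
  refine frobOn_le_of_forall_lt_representable (by simp [hcop]) fun N _ hN => ?_
  obtain ⟨v, ⟨hv_gt, hv_le⟩, hGv, hgv⟩ := exists_mem_Ioc_dvd_and_dvd_sub
    (Nat.isCoprime_iff_coprime.mpr hGg) (by positivity) N
    (frobOn G (insert none (B.image some)) (fun o => o.elim g a))
  obtain ⟨m, hm⟩ := (representable_of_frobOn_lt
    (by rwa [hgcd, Nat.lcm_one_left]) hv_gt).exists_of_insert_none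
  have hu : Representable A a (N - (v - m * g)) := by
    refine representable_of_frobOn_lt (h := g) ?_ ?_
    · rw [← hg, Nat.lcm_self, show N - (v - m * g) = N - v + m * g by ring]
      exact dvd_add hgv (dvd_mul_left _ _)
    · have : (0 : ℤ) ≤ m * g := by positivity
      linarith
  simpa [hunion] using hu.union hAB hm

/-- **Lemma (recursive bound on Frobenius numbers, with parameter `G`).**
Let `a₀,…,aₙ` be coprime positive integers, `g := gcd(a₀,…,a_k)` for some `0 ≤ k < n`,
and `G` a positive integer coprime to `g`.  Then
`F(a₀,…,aₙ) ≤ F^g(a₀,…,a_k) + F^G(a_{k+1},…,aₙ,g) + g·G`. -/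
theorem frobenius_recursive_bound_G (n k : ℕ) (hk : k < n)
    (a : Fin (n + 1) → ℕ) (ha : ∀ i, 0 < a i)
    (hcop : Finset.univ.gcd a = 1)
    (g : ℕ) (hg : g = (Finset.univ.filter (fun i : Fin (n + 1) => (i : ℕ) ≤ k)).gcd a)
    (G : ℕ) (hG : 0 < G) (hGg : Nat.Coprime G g) :
    frobNum 1 a ≤
      frobOn g (Finset.univ.filter (fun i : Fin (n + 1) => (i : ℕ) ≤ k)) a
      + frobOn G
          (insert (none : Option (Fin (n + 1)))
            ((Finset.univ.filter (fun i : Fin (n + 1) => k < (i : ℕ))).image some))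
          (fun o => o.elim g a)
      + (g : ℤ) * G :=
  frobenius_recursive_bound_G_general n k a ha hcop g hg G hG hGg
end

section
/- Let a_0,…,a_n be positive integers with gcd(a_0,…,a_n) = 1, and let g := gcd(a_0,…,a_k) for some 0 ≤ k < n. Then F(a_0,…,a_n) ≤ F^g(a_0,…,a_k) + F(a_{k+1},…,a_n,g) + g. -/
/-! The comparison is a single splitting. If `F(A ∪ B) - F^g(A) - g` exceeded `F(B, g)`, it would
be a combination `m g + w` with `w` a combination of `B`; then `F^g(A) + (m + 1) g` is a multiple
of `g` above `F^g(A)`, hence a combination of `A`, and adding `w` represents `F(A ∪ B)` itself. -/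

open Finset

variable {κ : Type*}

def IsNatComb (A : Finset κ) (a : κ → ℕ) (z : ℤ) : Prop :=
  ∃ x : κ → ℕ, ((∑ i ∈ A, x i * a i : ℕ) : ℤ) = z

namespace IsNatComb

variable {A B : Finset κ} {a : κ → ℕ} {z w : ℤ}

lemma nonneg (hz : IsNatComb A a z) : 0 ≤ z := by
  obtain ⟨x, rfl⟩ := hz
  positivity

lemma zero : IsNatComb A a 0 := ⟨0, by simp⟩

lemma add (hz : IsNatComb A a z) (hw : IsNatComb A a w) : IsNatComb A a (z + w) := by
  obtain ⟨x, rfl⟩ := hz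
  obtain ⟨y, rfl⟩ := hw
  exact ⟨x + y, by push_cast [Pi.add_apply, add_mul, sum_add_distrib]; rfl⟩

lemma of_mem [DecidableEq κ] {i : κ} (hi : i ∈ A) : IsNatComb A a (a i) :=
  ⟨Pi.single i 1, by simp [Pi.single_apply, hi]⟩

lemma of_mem_closure {n : ℕ} (hn : n ∈ AddSubmonoid.closure (a '' A)) : IsNatComb A a n := by
  classical
  induction hn using AddSubmonoid.closure_induction with
  | mem _ h =>
    obtain ⟨i, hi, rfl⟩ := h
    exact of_mem hi
  | zero => exact zero
  | add _ _ _ _ hx hy => exact_mod_cast hx.add hy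

lemma exists_forall_ge (A : Finset κ) (a : κ → ℕ) :
    ∃ M : ℤ, ∀ z, M ≤ z → ((A.gcd a : ℕ) : ℤ) ∣ z → IsNatComb A a z := by
  obtain ⟨M, hM⟩ := Nat.exists_mem_closure_of_ge (a '' A)
  refine ⟨M, fun z hz hdvd => ?_⟩
  lift z to ℕ using (Int.natCast_nonneg M).trans hz
  have hgcd : Nat.setGcd (a '' A) ∣ A.gcd a :=
    Finset.dvd_gcd fun i hi => Nat.setGcd_dvd_of_mem ⟨i, hi, rfl⟩
  exact of_mem_closure (hM z (by exact_mod_cast hz) (hgcd.trans (Int.natCast_dvd_natCast.mp hdvd)))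

lemma union [DecidableEq κ] (hAB : Disjoint A B) (hz : IsNatComb A a z) (hw : IsNatComb B a w) :
    IsNatComb (A ∪ B) a (z + w) := by
  obtain ⟨x, rfl⟩ := hz
  obtain ⟨y, rfl⟩ := hw
  refine ⟨fun i => if i ∈ A then x i else y i, ?_⟩
  rw [sum_union hAB]
  push_cast
  congr 1
  · exact sum_congr rfl fun i hi => by rw [if_pos hi]
  · exact sum_congr rfl fun i hi => by rw [if_neg (disjoint_right.mp hAB hi)]

lemma exists_of_insert_none [DecidableEq κ] {g : ℕ}
    (hz : IsNatComb (insert none (B.image some)) (fun o => o.elim g a) z) :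
    ∃ m : ℕ, IsNatComb B a (z - m * g) := by
  obtain ⟨x, rfl⟩ := hz
  refine ⟨x none, x ∘ some, ?_⟩
  rw [sum_insert (by simp), sum_image (fun _ _ _ _ h => Option.some_injective _ h)]
  push_cast
  simp

end IsNatComb

section frobOn

variable (h : ℕ) (A : Finset κ) (a : κ → ℕ)

def frobSet : Set ℤ :=
  {z | ((Nat.lcm (A.gcd a) h : ℕ) : ℤ) ∣ z ∧ ¬ IsNatComb A a z}

lemma bddAbove_frobSet : BddAbove (frobSet h A a) := by
  obtain ⟨M, hM⟩ := IsNatComb.exists_forall_ge A a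
  refine ⟨M, fun z ⟨hdvd, hz⟩ => ?_⟩
  by_contra! hlt
  exact hz (hM z hlt.le ((Int.natCast_dvd_natCast.mpr (Nat.dvd_lcm_left _ _)).trans hdvd))

variable {h A a}

lemma frobSet_nonempty (hL : Nat.lcm (A.gcd a) h ≠ 0) : (frobSet h A a).Nonempty :=
  ⟨-(Nat.lcm (A.gcd a) h : ℤ), (dvd_neg).mpr dvd_rfl, fun hz => by have := hz.nonneg; omega⟩

lemma frobOn_mem_frobSet (hL : Nat.lcm (A.gcd a) h ≠ 0) : frobOn h A a ∈ frobSet h A a :=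
  Int.csSup_mem (frobSet_nonempty hL) (bddAbove_frobSet h A a)

lemma isNatComb_of_frobOn_lt {z : ℤ} (hdvd : ((Nat.lcm (A.gcd a) h : ℕ) : ℤ) ∣ z)
    (hlt : frobOn h A a < z) : IsNatComb A a z := by
  by_contra hz
  exact hlt.not_ge (le_csSup (bddAbove_frobSet h A a) ⟨hdvd, hz⟩)

end frobOn

theorem frobOn_union_le [DecidableEq κ] {A B : Finset κ} (hAB : Disjoint A B) {a : κ → ℕ}
    (hA : A.gcd a ≠ 0) :
    frobOn 1 (A ∪ B) a ≤ frobOn (A.gcd a) A a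
      + frobOn 1 (insert none (B.image some)) (fun o => o.elim (A.gcd a) a) + A.gcd a := by
  set g := A.gcd a
  set F₁ := frobOn g A a
  have hgcd : (A ∪ B).gcd a = Nat.gcd g (B.gcd a) := gcd_union
  have hgcd₂ : (insert none (B.image some)).gcd (fun o => o.elim g a) = (A ∪ B).gcd a := by
    rw [gcd_insert, gcd_image, hgcd]
    rfl
  have hd : (A ∪ B).gcd a ≠ 0 := hgcd ▸ Nat.gcd_ne_zero_left hA
  obtain ⟨hdF, hF⟩ := frobOn_mem_frobSet (h := 1) (Nat.lcm_ne_zero hd one_ne_zero)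
  obtain ⟨hgF₁, -⟩ := frobOn_mem_frobSet (h := g) (A := A) (a := a) (Nat.lcm_ne_zero hA hA)
  rw [Nat.lcm_one_right] at hdF
  rw [Nat.lcm_self] at hgF₁
  have hdg : (((A ∪ B).gcd a : ℕ) : ℤ) ∣ g :=
    Int.natCast_dvd_natCast.mpr (hgcd ▸ Nat.gcd_dvd_left _ _)
  have hg : (0 : ℤ) < g := by positivity
  by_contra! hlt
  obtain ⟨m, hB⟩ := IsNatComb.exists_of_insert_none (z := frobOn 1 (A ∪ B) a - F₁ - g)
    (isNatComb_of_frobOn_lt (by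
      rw [hgcd₂, Nat.lcm_one_right]
      exact (hdF.sub (hdg.trans hgF₁)).sub hdg) (by linarith))
  have hA' : IsNatComb A a (F₁ + (m + 1) * g) :=
    isNatComb_of_frobOn_lt (by rw [Nat.lcm_self]; exact hgF₁.add (dvd_mul_left _ _))
      (by nlinarith)
  exact hF (by convert hA'.union hAB hB using 1; ring)

theorem frobenius_recursive_bound_general (n k : ℕ)
    (a : Fin (n + 1) → ℕ) (ha : ∀ i, 0 < a i)
    (g : ℕ) (hg : g = (Finset.univ.filter (fun i : Fin (n + 1) => (i : ℕ) ≤ k)).gcd a) :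
    frobNum 1 a ≤
      frobOn g (Finset.univ.filter (fun i : Fin (n + 1) => (i : ℕ) ≤ k)) a
      + frobOn 1
          (insert (none : Option (Fin (n + 1)))
            ((Finset.univ.filter (fun i : Fin (n + 1) => k < (i : ℕ))).image some))
          (fun o => o.elim g a)
      + (g : ℤ) := by
  subst hg
  set A := univ.filter (fun i : Fin (n + 1) => (i : ℕ) ≤ k)
  set B := univ.filter (fun i : Fin (n + 1) => k < (i : ℕ))
  have hunion : A ∪ B = univ := by
    ext i
    simp only [A, B, mem_union, mem_filter, mem_univ, true_and, iff_true]
    omega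
  have hAB : Disjoint A B := disjoint_filter.mpr fun i _ hi => by omega
  have hA : A.gcd a ≠ 0 := fun h0 => (ha 0).ne' (gcd_eq_zero_iff.mp h0 0 (by simp [A]))
  calc frobNum 1 a = frobOn 1 (A ∪ B) a := by rw [hunion]; rfl
    _ ≤ _ := frobOn_union_le hAB hA

/-- **Lemma (recursive bound on Frobenius numbers).**
Let `a₀,…,aₙ` be coprime positive integers and `g := gcd(a₀,…,a_k)` for some
`0 ≤ k < n`.  Then `F(a₀,…,aₙ) ≤ F^g(a₀,…,a_k) + F(a_{k+1},…,aₙ,g) + g`. -/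
theorem frobenius_recursive_bound (n k : ℕ) (hk : k < n)
    (a : Fin (n + 1) → ℕ) (ha : ∀ i, 0 < a i)
    (hcop : Finset.univ.gcd a = 1)
    (g : ℕ) (hg : g = (Finset.univ.filter (fun i : Fin (n + 1) => (i : ℕ) ≤ k)).gcd a) :
    frobNum 1 a ≤
      frobOn g (Finset.univ.filter (fun i : Fin (n + 1) => (i : ℕ) ≤ k)) a
      + frobOn 1
          (insert (none : Option (Fin (n + 1)))
            ((Finset.univ.filter (fun i : Fin (n + 1) => k < (i : ℕ))).image some))
          (fun o => o.elim g a)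
      + (g : ℤ) :=
  frobenius_recursive_bound_general n k a ha g hg
end

section
/- Let a_0,…,a_n be positive integers with gcd(a_0,…,a_n) = 1, and let I_1,…,I_k ⊆ {0,…,n} be nonempty (not necessarily disjoint) subsets. For each j let g_j := gcd_{i ∈ I_j}(a_i) and let a_{I_j} denote the subtuple of weights indexed by I_j. Suppose gcd(g_1,…,g_k) = 1. Then F(a_0,…,a_n) ≤ F(g_1,…,g_k) + Σ_{j=1}^k g_j + Σ_{j=1}^k F^{g_j}(a_{I_j}). -/
open Finset

lemma rep_large_s11 {κ : Type*} (a : κ → ℕ) {A : Finset κ} (hA : A.Nonempty) :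
    (∀ i ∈ A, 0 < a i) →
    ∃ B : ℕ, ∀ m : ℕ, A.gcd a ∣ m → B ≤ m → ∃ x : κ → ℕ, ∑ i ∈ A, x i * a i = m := by
  induction hA using Finset.Nonempty.cons_induction with
  | singleton i =>
    intro _
    refine ⟨0, fun m hm _ => ⟨fun _ => m / a i, ?_⟩⟩
    rw [Finset.sum_singleton]
    exact Nat.div_mul_cancel (by simpa using hm)
  | cons i A' hi hA' ih =>
    intro ha
    classical
    obtain ⟨B', hB'⟩ := ih (fun j hj => ha j (Finset.mem_cons_of_mem hj))
    have hai : 0 < a i := ha i (Finset.mem_cons_self i A')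
    set g' := A'.gcd a with hg'
    have hg'pos : 0 < g' := by
      rcases hA' with ⟨j, hj⟩
      refine Nat.pos_of_ne_zero fun h0 => ?_
      have := (Finset.gcd_eq_zero_iff.mp h0) j hj
      exact absurd this (ha j (Finset.mem_cons_of_mem hj)).ne'
    refine ⟨B' + g' * a i, fun m hm hBm => ?_⟩
    have hd : Nat.gcd (a i) g' ∣ m := by
      have : (cons i A' hi).gcd a = Nat.gcd (a i) g' := by
        rw [Finset.cons_eq_insert, Finset.gcd_insert, ← hg']; rfl
      rwa [this] at hm
    obtain ⟨q, hq⟩ := hd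
    set u := Nat.gcdA (a i) g' with hu
    set v := Nat.gcdB (a i) g' with hv
    have hbez : (Nat.gcd (a i) g' : ℤ) = a i * u + g' * v := Nat.gcd_eq_gcd_ab _ _
    set t : ℕ := (u * q % (g' : ℤ)).toNat with htdef
    have htz : (t : ℤ) = u * q % (g' : ℤ) :=
      Int.toNat_of_nonneg (Int.emod_nonneg _ (by exact_mod_cast hg'pos.ne'))
    have htlt : (t : ℤ) < g' := by
      rw [htz]; exact Int.emod_lt_of_pos _ (by exact_mod_cast hg'pos)
    have hdvd : (g' : ℤ) ∣ (m : ℤ) - a i * t := by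
      have h1 : (m : ℤ) = a i * (u * q) + g' * (v * q) := by
        have : (m : ℤ) = (Nat.gcd (a i) g' : ℤ) * q := by exact_mod_cast hq
        rw [this, hbez]; ring
      have h2 : (g' : ℤ) ∣ (u * q) - t := by
        rw [htz]
        have := Int.emod_add_mul_ediv (u * q) (g' : ℤ)
        exact ⟨u * q / g', by linarith⟩
      obtain ⟨w, hw⟩ := h2
      exact ⟨v * q + a i * w, by rw [h1]; nlinarith [hw]⟩
    have htle : t ≤ g' := by exact_mod_cast htlt.le
    have hle : a i * t ≤ m := by
      have : a i * t ≤ g' * a i := by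
        calc a i * t ≤ a i * g' := Nat.mul_le_mul_left _ htle
        _ = g' * a i := Nat.mul_comm _ _
      omega
    set m' := m - a i * t with hm'def
    have hm'1 : a i * t + m' = m := by omega
    have hdvd' : g' ∣ m' := by
      have : (m' : ℤ) = (m : ℤ) - a i * t := by push_cast; omega
      exact_mod_cast this ▸ hdvd
    have hB'm' : B' ≤ m' := by
      have : a i * t ≤ g' * a i := by
        calc a i * t ≤ a i * g' := Nat.mul_le_mul_left _ htle
        _ = g' * a i := Nat.mul_comm _ _
      omega
    obtain ⟨y, hy⟩ := hB' m' hdvd' hB'm'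
    refine ⟨fun jj => if jj = i then t else y jj, ?_⟩
    rw [Finset.sum_cons]
    rw [show ∑ j ∈ A', (if j = i then t else y j) * a j = ∑ j ∈ A', y j * a j from
      Finset.sum_congr rfl fun j hj => by rw [if_neg (by rintro rfl; exact hi hj)]]
    rw [hy]
    show (if i = i then t else y i) * a i + m' = m
    rw [if_pos rfl, Nat.mul_comm t (a i)]
    exact hm'1


lemma frob_spec {κ : Type*} (h : ℕ) (A : Finset κ) (a : κ → ℕ)
    (hA : A.Nonempty) (ha : ∀ i ∈ A, 0 < a i) {c : ℕ} (hc : Nat.lcm (A.gcd a) h = c)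
    (hcpos : 0 < c) :
    ((c : ℤ) ∣ frobOn h A a) ∧ -(c : ℤ) ≤ frobOn h A a ∧
      ∀ z : ℤ, (c : ℤ) ∣ z → frobOn h A a < z →
        ∃ x : κ → ℕ, ((∑ i ∈ A, x i * a i : ℕ) : ℤ) = z := by
  set S : Set ℤ := {z | ((c : ℕ) : ℤ) ∣ z ∧
    ¬ ∃ x : κ → ℕ, ((∑ i ∈ A, x i * a i : ℕ) : ℤ) = z} with hS
  have hfr : frobOn h A a = sSup S := by rw [frobOn, hc]
  have hmemc : -(c : ℤ) ∈ S := by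
    refine ⟨dvd_neg.mpr dvd_rfl, ?_⟩
    rintro ⟨x, hx⟩
    have h0 : (0 : ℤ) ≤ ((∑ i ∈ A, x i * a i : ℕ) : ℤ) := Int.natCast_nonneg _
    rw [hx] at h0
    have : (0 : ℤ) < c := by exact_mod_cast hcpos
    omega
  have hne : S.Nonempty := ⟨_, hmemc⟩
  obtain ⟨B, hB⟩ := rep_large_s11 a hA ha
  have hub : ∀ z ∈ S, z ≤ (B : ℤ) := by
    intro z hz
    by_contra hlt
    push_neg at hlt
    have hz0 : 0 ≤ z := le_trans (Int.natCast_nonneg B) hlt.le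
    lift z to ℕ using hz0
    have hcz : c ∣ z := by exact_mod_cast hz.1
    have hgz : A.gcd a ∣ z := dvd_trans (hc ▸ Nat.dvd_lcm_left _ _) hcz
    obtain ⟨x, hx⟩ := hB z hgz (by exact_mod_cast hlt.le)
    exact hz.2 ⟨x, by exact_mod_cast hx⟩
  have hbdd : BddAbove S := ⟨(B : ℤ), fun z hz => hub z hz⟩
  have hmem : sSup S ∈ S := Int.csSup_mem hne hbdd
  refine ⟨hfr ▸ hmem.1, hfr ▸ le_csSup hbdd hmemc, ?_⟩
  intro z hdvd hlt
  by_contra hrep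
  have hzS : z ∈ S := ⟨hdvd, hrep⟩
  have := le_csSup hbdd hzS
  rw [hfr] at hlt
  omega

/-- **Lemma (recursive bound via several gcds).**
Let `a₀,…,aₙ` be coprime positive integers, `I₁,…,I_k ⊆ {0,…,n}` nonempty subsets with
`g_j := gcd_{i ∈ I_j}(a_i)`, and suppose the `g_j` are coprime.  Then
`F(a₀,…,aₙ) ≤ F(g₁,…,g_k) + Σ_j g_j + Σ_j F^{g_j}(a_{I_j})`. -/
theorem frobenius_recursive_bound_multi (n k : ℕ)
    (a : Fin (n + 1) → ℕ) (ha : ∀ i, 0 < a i)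
    (hcop : Finset.univ.gcd a = 1)
    (I : Fin k → Finset (Fin (n + 1))) (hI : ∀ j, (I j).Nonempty)
    (g : Fin k → ℕ) (hg : ∀ j, g j = (I j).gcd a)
    (hgcop : Finset.univ.gcd g = 1) :
    frobNum 1 a ≤
      frobNum 1 g + (∑ j, (g j : ℤ)) + ∑ j, frobOn (g j) (I j) a := by
  classical
  have hgpos : ∀ j, 0 < g j := by
    intro j
    rw [hg j]
    rcases hI j with ⟨i, hi⟩
    exact Nat.pos_of_ne_zero fun h0 => (ha i).ne' ((Finset.gcd_eq_zero_iff.mp h0) i hi)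
  have hkpos : 0 < k := by
    rcases Nat.eq_zero_or_pos k with h0 | h
    · exfalso
      subst h0
      rw [Finset.univ_eq_empty, Finset.gcd_empty] at hgcop
      exact absurd hgcop (by norm_num)
    · exact h
  have hUnivk : (Finset.univ : Finset (Fin k)).Nonempty := by
    have : Nonempty (Fin k) := Fin.pos_iff_nonempty.mp hkpos
    exact Finset.univ_nonempty
  obtain ⟨_, _, hgrep⟩ := frob_spec 1 Finset.univ g hUnivk (fun j _ => hgpos j)
    (c := 1) (by rw [hgcop]; exact Nat.lcm_self 1) Nat.one_pos
  have hspec : ∀ j, ((g j : ℤ) ∣ frobOn (g j) (I j) a) ∧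
      -(g j : ℤ) ≤ frobOn (g j) (I j) a ∧
      ∀ z : ℤ, (g j : ℤ) ∣ z → frobOn (g j) (I j) a < z →
        ∃ x : Fin (n + 1) → ℕ, ((∑ i ∈ I j, x i * a i : ℕ) : ℤ) = z :=
    fun j => frob_spec (g j) (I j) a (hI j) (fun i _ => ha i)
      (by rw [← hg j, Nat.lcm_self]) (hgpos j)
  rw [show frobNum 1 a = frobOn 1 Finset.univ a from rfl, frobOn]
  apply csSup_le
  · refine ⟨-1, ?_, ?_⟩
    · rw [hcop]; simp
    · rintro ⟨x, hx⟩
      have h0 : (0 : ℤ) ≤ ((∑ i, x i * a i : ℕ) : ℤ) := Int.natCast_nonneg _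
      omega
  · intro z hz
    by_contra hzgt
    push_neg at hzgt
    set Fg := frobNum 1 g with hFg
    set F : Fin k → ℤ := fun j => frobOn (g j) (I j) a with hF
    have h1 : Fg < z - ∑ j, ((g j : ℤ) + F j) := by
      rw [Finset.sum_add_distrib]
      have : Fg + (∑ j, (g j : ℤ)) + ∑ j, F j < z := hzgt
      linarith
    obtain ⟨c, hcrep⟩ := hgrep _ (by simpa using (one_dvd _)) h1
    have hw : ∀ j, ∃ x : Fin (n + 1) → ℕ,
        ((∑ i ∈ I j, x i * a i : ℕ) : ℤ) = (c j : ℤ) * g j + g j + F j := by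
      intro j
      obtain ⟨hdvdj, _, hrepj⟩ := hspec j
      refine hrepj _ (dvd_add (dvd_add ⟨c j, mul_comm _ _⟩ dvd_rfl) hdvdj) ?_
      have hcg : (0 : ℤ) ≤ (c j : ℤ) * g j := by positivity
      have hgj : (0 : ℤ) < g j := by exact_mod_cast hgpos j
      linarith
    choose x hx using hw
    apply hz.2
    refine ⟨fun i => ∑ j, if i ∈ I j then x j i else 0, ?_⟩
    push_cast
    have step1 : ∀ i : Fin (n + 1),
        (∑ j, if i ∈ I j then (x j i : ℤ) else 0) * a i
          = ∑ j, if i ∈ I j then (x j i : ℤ) * a i else 0 := by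
      intro i
      rw [Finset.sum_mul]
      exact Finset.sum_congr rfl fun j _ => by split <;> simp
    rw [Finset.sum_congr rfl fun i _ => step1 i, Finset.sum_comm]
    have step2 : ∀ j : Fin k,
        (∑ i, if i ∈ I j then (x j i : ℤ) * a i else 0) = ∑ i ∈ I j, (x j i : ℤ) * a i := by
      intro j
      rw [Finset.sum_ite_mem, Finset.univ_inter]
    rw [Finset.sum_congr rfl fun j _ => step2 j]
    have hx' : ∀ j, ∑ i ∈ I j, (x j i : ℤ) * (a i : ℤ) = (c j : ℤ) * g j + g j + F j := by
      intro j
      rw [← hx j]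
      push_cast
      rfl
    rw [Finset.sum_congr rfl fun j _ => hx' j]
    push_cast at hcrep
    rw [Finset.sum_add_distrib, Finset.sum_add_distrib]
    rw [Finset.sum_add_distrib] at hcrep
    linarith [hcrep]
end

section
/- Let (d;a) be an h-regular pair and let g := gcd(a_{i_1},…,a_{i_m}) > 1 for some nonempty set of weights a_{i_1},…,a_{i_m} of the pair. Then the pair (d(g);a(g)) is h-regular, and the pair (d(g)/g; a(g)/g), obtained from (d(g);a(g)) by dividing every entry by g, is h'-regular with h' := h/gcd(g,h). -/
open Finset

/-! For `I ⊆ a(g)` one has `gcd a_I = g · gcd (a/g)_I`. Hence every divisibility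
`gcd a_I ∣ d_p` or `gcd a_I ∣ h` supplied by the regularity of `(d;a)` divides down to
`gcd (a/g)_I ∣ d_p/g` resp. `gcd (a/g)_I ∣ h/g = h/gcd(g,h)`, and the degrees `d_p` involved
are divisible by `g`, so they belong to `d(g)`. -/

theorem Finset.gcd_eq_mul_gcd_div {κ : Type*} {s : Finset κ} {f : κ → ℕ} {g : ℕ}
    (hf : ∀ i ∈ s, g ∣ f i) : s.gcd f = g * s.gcd (fun i => f i / g) :=
  calc s.gcd f = s.gcd (fun i => g * (f i / g)) :=
        Finset.gcd_congr rfl fun i hi => (Nat.mul_div_cancel' (hf i hi)).symm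
    _ = g * s.gcd (fun i => f i / g) := by rw [Finset.gcd_mul_left, normalize_eq]

namespace IsHRegularOn

variable {ι κ : Type*} {h g : ℕ} {D : Finset ι} {d : ι → ℕ} {A : Finset κ} {a : κ → ℕ}

theorem filter_dvd (hreg : IsHRegularOn h D d A a) :
    IsHRegularOn h (D.filter (g ∣ d ·)) d (A.filter (g ∣ a ·)) a := by
  intro I hIA hI hgcd
  have hg : g ∣ I.gcd a := dvd_gcd_iff.mpr fun i hi => (mem_filter.mp (hIA hi)).2
  refine (hreg I (hIA.trans (filter_subset _ _)) hI hgcd).imp_left ?_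
  rintro ⟨P, hPD, hcard, hPd⟩
  exact ⟨P, fun j hj => mem_filter.mpr ⟨hPD hj, hg.trans (hPd j hj)⟩, hcard, hPd⟩

theorem div (hreg : IsHRegularOn h D d A a) (hg : 0 < g) (hA : ∀ i ∈ A, g ∣ a i) :
    IsHRegularOn (h / Nat.gcd g h) D (fun j => d j / g) A (fun i => a i / g) := by
  intro I hIA hI hgcd
  have hIg : I.gcd a = g * I.gcd (fun i => a i / g) :=
    Finset.gcd_eq_mul_gcd_div fun i hi => hA i (hIA hi)
  have hgcd' : 1 < I.gcd a := hIg ▸ hgcd.trans_le (Nat.le_mul_of_pos_left _ hg)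
  rcases hreg I hIA hI hgcd' with ⟨P, hPD, hcard, hPd⟩ | hh
  · exact .inl ⟨P, hPD, hcard, fun j hj => Nat.dvd_div_of_mul_dvd (hIg ▸ hPd j hj)⟩
  · rw [hIg] at hh
    rw [Nat.gcd_eq_left (dvd_of_mul_right_dvd hh)]
    exact .inr (Nat.dvd_div_of_mul_dvd hh)

end IsHRegularOn

theorem subpair_regularity_general (h c n : ℕ)
    (d : Fin c → ℕ) (a : Fin (n + 1) → ℕ)
    (hreg : IsHRegularPair h d a)
    (g : ℕ) (hg : 1 < g) :
    IsHRegularOn h (Finset.univ.filter (fun j => g ∣ d j)) d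
        (Finset.univ.filter (fun i => g ∣ a i)) a
    ∧ IsHRegularOn (h / Nat.gcd g h)
        (Finset.univ.filter (fun j => g ∣ d j)) (fun j => d j / g)
        (Finset.univ.filter (fun i => g ∣ a i)) (fun i => a i / g) :=
  have hsub := IsHRegularOn.filter_dvd (g := g) hreg
  ⟨hsub, hsub.div (by omega) fun _ hi => (mem_filter.mp hi).2⟩

/-- **Corollary (regularity of the subpair of entries divisible by a gcd of weights).**
Let `(d;a)` be an `h`-regular pair and `g := gcd(a_{i₁},…,a_{i_m}) > 1` for some
weights of the pair.  Then `(d(g);a(g))` is `h`-regular, and `(d(g)/g;a(g)/g)` is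
`h/gcd(g,h)`-regular. -/
theorem subpair_regularity (h c n : ℕ) (hh : 0 < h)
    (d : Fin c → ℕ) (a : Fin (n + 1) → ℕ)
    (hd : ∀ j, 0 < d j) (ha : ∀ i, 0 < a i)
    (hreg : IsHRegularPair h d a)
    (S : Finset (Fin (n + 1))) (hS : S.Nonempty)
    (g : ℕ) (hgdef : g = S.gcd a) (hg : 1 < g) :
    IsHRegularOn h (Finset.univ.filter (fun j => g ∣ d j)) d
        (Finset.univ.filter (fun i => g ∣ a i)) a
    ∧ IsHRegularOn (h / Nat.gcd g h)
        (Finset.univ.filter (fun j => g ∣ d j)) (fun j => d j / g)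
        (Finset.univ.filter (fun i => g ∣ a i)) (fun i => a i / g) :=
  subpair_regularity_general h c n d a hreg g hg
end

section
/- Let h ≥ 2 and c ≥ 1 be integers. Assume that for every positive integer h' < h and every h'-regular pair (d';a') = (d_1',…,d_{c'}'; a_0',…,a_{n'}') with c' ≤ c, c' ≤ n' and a_i' ∤ h' for all i, one has δ(d';a') ≥ F^{h'}(a_0',…,a_{n'}'). Let (d;a) = (d_1,…,d_c; a_0,…,a_n) be an h-regular pair with c ≤ n and a_i ∤ h for all i, and suppose there exists a prime p dividing h such that δ̄(p) := δ(d;a) − δ(d(p);a(p)) ≤ 0. Then δ(d;a) ≥ F^h(a_0,…,a_n). -/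
open Finset

/-!
Dividing by `p` every degree and every weight that `p` divides turns an `h`-regular pair into
an `h / p`-regular one `(d';a')`: the gcd of the new weights over any index set is the old gcd
with one factor `p` removed (if `p` divides it), and divisibility survives this operation. The
induction hypothesis gives `δ(d';a') ≥ F^{h/p}(a')`. On the other hand
`p δ(d';a') = δ(d;a) + (p - 1) δ̄(p) ≤ δ(d;a)`, and every nonrepresentable multiple `z` of
`lcm (gcd a, h)` is `p w` with `w` a nonrepresentable multiple of `lcm (gcd a', h / p)`, so
`F^h(a) ≤ p F^{h/p}(a')`.
-/

def divIfDvd (p m : ℕ) : ℕ := if p ∣ m then m / p else m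

section divIfDvd

variable {p m : ℕ}

theorem divIfDvd_of_dvd (h : p ∣ m) : divIfDvd p m = m / p := if_pos h

theorem divIfDvd_of_not_dvd (h : ¬ p ∣ m) : divIfDvd p m = m := if_neg h

theorem mul_divIfDvd (p m : ℕ) : p * divIfDvd p m = if p ∣ m then m else p * m := by
  unfold divIfDvd
  split_ifs with h
  exacts [Nat.mul_div_cancel' h, rfl]

theorem divIfDvd_dvd (p m : ℕ) : divIfDvd p m ∣ m := by
  unfold divIfDvd
  split_ifs with h
  exacts [Nat.div_dvd_of_dvd h, dvd_rfl]

theorem dvd_mul_divIfDvd (p m : ℕ) : m ∣ p * divIfDvd p m := by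
  rw [mul_divIfDvd]
  split_ifs
  exacts [dvd_rfl, dvd_mul_left m p]

theorem divIfDvd_pos (hm : 0 < m) : 0 < divIfDvd p m :=
  Nat.pos_of_dvd_of_pos (divIfDvd_dvd p m) hm

theorem divIfDvd_mul_self (hp : p ≠ 0) (m : ℕ) : divIfDvd p (p * m) = m := by
  rw [divIfDvd_of_dvd (dvd_mul_right p m), Nat.mul_div_cancel_left m (Nat.pos_of_ne_zero hp)]

theorem dvd_divIfDvd_of_coprime {b : ℕ} (hbp : b.Coprime p) (hbm : b ∣ m) :
    b ∣ divIfDvd p m := by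
  unfold divIfDvd
  split_ifs with h
  · exact hbp.dvd_of_dvd_mul_right (by rwa [Nat.div_mul_cancel h])
  · exact hbm

theorem divIfDvd_dvd_divIfDvd (hp : p.Prime) {b : ℕ} (hbm : b ∣ m) :
    divIfDvd p b ∣ divIfDvd p m := by
  by_cases hpb : p ∣ b
  · rw [divIfDvd_of_dvd hpb, divIfDvd_of_dvd (hpb.trans hbm)]
    exact Nat.div_dvd_div hpb hbm
  · rw [divIfDvd_of_not_dvd hpb]
    exact dvd_divIfDvd_of_coprime ((hp.coprime_iff_not_dvd.mpr hpb).symm) hbm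

theorem gcd_divIfDvd {ι : Type*} (hp : p.Prime) (s : Finset ι) (f : ι → ℕ) :
    s.gcd (fun i => divIfDvd p (f i)) = divIfDvd p (s.gcd f) := by
  by_cases hall : ∀ i ∈ s, p ∣ f i
  · have hgcd : s.gcd f = p * s.gcd (fun i => divIfDvd p (f i)) := by
      rw [← normalize_eq p, ← Finset.gcd_mul_left, normalize_eq]
      exact Finset.gcd_congr rfl fun i hi => by rw [mul_divIfDvd, if_pos (hall i hi)]
    rw [hgcd, divIfDvd_mul_self hp.ne_zero]
  · push Not at hall
    obtain ⟨i₀, hi₀, hpi₀⟩ := hall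
    have hpg : ¬ p ∣ s.gcd f := fun h => hpi₀ (h.trans (gcd_dvd hi₀))
    rw [divIfDvd_of_not_dvd hpg]
    exact dvd_antisymm (dvd_gcd fun i hi => (gcd_dvd hi).trans (divIfDvd_dvd p (f i)))
      (dvd_gcd fun i hi =>
        dvd_divIfDvd_of_coprime (hp.coprime_iff_not_dvd.mpr hpg).symm (gcd_dvd hi))

theorem mul_sum_divIfDvd {ι : Type*} (p : ℕ) (s : Finset ι) (f : ι → ℕ) :
    (p : ℤ) * ∑ i ∈ s, (divIfDvd p (f i) : ℤ)
      = ∑ i ∈ s.filter (fun i => p ∣ f i), (f i : ℤ)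
        + p * ∑ i ∈ s.filter (fun i => ¬ p ∣ f i), (f i : ℤ) := by
  rw [mul_sum, mul_sum, ← sum_ite]
  refine sum_congr rfl fun i _ => ?_
  have := congrArg (Nat.cast (R := ℤ)) (mul_divIfDvd p (f i))
  push_cast [apply_ite (Nat.cast (R := ℤ))] at this
  exact this

end divIfDvd

theorem mul_deltaOn_divIfDvd {ι κ : Type*} (p : ℕ) (D : Finset ι) (d : ι → ℕ)
    (A : Finset κ) (a : κ → ℕ) :
    (p : ℤ) * deltaOn D (fun j => divIfDvd p (d j)) A (fun i => divIfDvd p (a i))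
      = deltaOn D d A a + (p - 1) * (deltaOn D d A a
          - deltaOn (D.filter fun j => p ∣ d j) d (A.filter fun i => p ∣ a i) a) := by
  unfold deltaOn
  rw [mul_sub, mul_sum_divIfDvd, mul_sum_divIfDvd,
    ← sum_filter_add_sum_filter_not D (fun j => p ∣ d j) (fun j => (d j : ℤ)),
    ← sum_filter_add_sum_filter_not A (fun i => p ∣ a i) (fun i => (a i : ℤ))]
  ring

theorem isHRegularOn_divIfDvd {ι κ : Type*} {p k : ℕ} (hp : p.Prime) {D : Finset ι}
    {d : ι → ℕ} {A : Finset κ} {a : κ → ℕ} (hreg : IsHRegularOn (p * k) D d A a) :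
    IsHRegularOn k D (fun j => divIfDvd p (d j)) A (fun i => divIfDvd p (a i)) := by
  intro I hIA hI hgcd
  rw [gcd_divIfDvd hp] at hgcd ⊢
  have hgcd_ne : I.gcd a ≠ 0 := fun h0 => by simp [h0, divIfDvd] at hgcd
  have hgcd' : 1 < I.gcd a :=
    hgcd.trans_le (Nat.le_of_dvd (Nat.pos_of_ne_zero hgcd_ne) (divIfDvd_dvd p _))
  rcases hreg I hIA hI hgcd' with ⟨P, hPD, hcard, hPd⟩ | hdvd
  · exact Or.inl ⟨P, hPD, hcard, fun j hj => divIfDvd_dvd_divIfDvd hp (hPd j hj)⟩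
  · exact Or.inr (divIfDvd_mul_self hp.ne_zero k ▸ divIfDvd_dvd_divIfDvd hp hdvd)

section Frobenius

variable {κ : Type*} [Fintype κ]

theorem exists_sum_mul_eq_of_ge (a : κ → ℕ) :
    ∃ B, ∀ m ≥ B, univ.gcd a ∣ m → ∃ x : κ → ℕ, ∑ i, x i * a i = m := by
  obtain ⟨B, hB⟩ := Nat.exists_mem_closure_of_ge (Set.range a)
  refine ⟨B, fun m hm hdvd => ?_⟩
  have hg : Nat.setGcd (Set.range a) ∣ univ.gcd a :=
    dvd_gcd fun i _ => Nat.setGcd_dvd_of_mem ⟨i, rfl⟩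
  have hmem := hB m hm (hg.trans hdvd)
  rw [← Submodule.span_nat_eq_addSubmonoidClosure, Submodule.mem_toAddSubmonoid,
    Submodule.mem_span_range_iff_exists_fun] at hmem
  simpa only [smul_eq_mul] using hmem

theorem le_frobNum {h : ℕ} {a : κ → ℕ} {z : ℤ} (hz : ((univ.gcd a).lcm h : ℤ) ∣ z)
    (hrep : ¬ ∃ x : κ → ℕ, ((∑ i, x i * a i : ℕ) : ℤ) = z) : z ≤ frobNum h a := by
  refine le_csSup ?_ ⟨hz, hrep⟩
  obtain ⟨B, hB⟩ := exists_sum_mul_eq_of_ge a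
  refine ⟨B, fun w ⟨hw, hwrep⟩ => ?_⟩
  by_contra! hlt
  lift w to ℕ using by omega
  have hgw : univ.gcd a ∣ w :=
    Int.natCast_dvd_natCast.mp ((Int.natCast_dvd_natCast.mpr (Nat.dvd_lcm_left _ h)).trans hw)
  obtain ⟨x, hx⟩ := hB w (by omega) hgw
  exact hwrep ⟨x, by rw [hx]⟩

theorem frobNum_le {h : ℕ} {a : κ → ℕ} {B : ℤ} (hg : univ.gcd a ≠ 0) (hh : h ≠ 0)
    (hB : ∀ z : ℤ, ((univ.gcd a).lcm h : ℤ) ∣ z →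
      (¬ ∃ x : κ → ℕ, ((∑ i, x i * a i : ℕ) : ℤ) = z) → z ≤ B) :
    frobNum h a ≤ B := by
  refine csSup_le ⟨-((univ.gcd a).lcm h : ℤ), dvd_neg.mpr dvd_rfl, ?_⟩ fun z hz => hB z hz.1 hz.2
  rintro ⟨x, hx⟩
  have : 0 < (univ.gcd a).lcm h := Nat.pos_of_ne_zero (Nat.lcm_ne_zero hg hh)
  omega

theorem frobNum_le_mul_frobNum_divIfDvd {p k : ℕ} (hp : p.Prime) (hk : k ≠ 0) {a : κ → ℕ}
    (ha : univ.gcd a ≠ 0) :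
    frobNum (p * k) a ≤ p * frobNum k (fun i => divIfDvd p (a i)) := by
  refine frobNum_le ha (mul_ne_zero hp.ne_zero hk) fun z hz hrep => ?_
  obtain ⟨w, rfl⟩ : (p : ℤ) ∣ z :=
    (Int.natCast_dvd_natCast.mpr ((dvd_mul_right p k).trans (Nat.dvd_lcm_right _ _))).trans hz
  refine mul_le_mul_of_nonneg_left (le_frobNum ?_ ?_) (Int.natCast_nonneg p)
  · have hz' : (univ.gcd a).lcm (p * k) ∣ p * w.natAbs := by
      simpa [Int.natAbs_mul] using Int.natAbs_dvd_natAbs.mpr hz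
    rw [gcd_divIfDvd hp, Int.natCast_dvd]
    refine Nat.lcm_dvd ?_ ?_
    · simpa only [divIfDvd_mul_self hp.ne_zero] using
        divIfDvd_dvd_divIfDvd hp ((Nat.dvd_lcm_left _ _).trans hz')
    · exact Nat.dvd_of_mul_dvd_mul_left hp.pos ((Nat.dvd_lcm_right _ _).trans hz')
  · rintro ⟨x, hx⟩
    refine hrep ⟨fun i => if p ∣ a i then x i else p * x i, ?_⟩
    have hsum : ∑ i, (if p ∣ a i then x i else p * x i) * a i
        = p * ∑ i, x i * divIfDvd p (a i) := by
      rw [mul_sum]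
      refine sum_congr rfl fun i _ => ?_
      rw [mul_left_comm, mul_divIfDvd]
      split_ifs <;> ring
    rw [hsum, Nat.cast_mul, hx]

end Frobenius

/-- **Lemma 4.9(i) (reduction to smaller regularity index).**
Assume Conjecture 4.11 holds for all `h'`-regular pairs of codimension at most `c` with
`h' < h`.  If `(d;a)` is an `h`-regular pair with `c ≤ n`, `aᵢ ∤ h` for all `i`, and
there is a prime `p ∣ h` with `δ̄(p) := δ(d;a) - δ(d(p);a(p)) ≤ 0`, then
`δ(d;a) ≥ F^h(a₀,…,aₙ)`. -/
theorem reduction_lemma_i (h c : ℕ) (hh : 2 ≤ h) (hc : 1 ≤ c)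
    (IH : ∀ (h' c' n' : ℕ), 0 < h' → h' < h → 1 ≤ c' → c' ≤ c → c' ≤ n' →
      ∀ (d' : Fin c' → ℕ) (a' : Fin (n' + 1) → ℕ),
        (∀ j, 0 < d' j) → (∀ i, 0 < a' i) → IsHRegularPair h' d' a' →
        (∀ i, ¬ a' i ∣ h') → deltaPair d' a' ≥ frobNum h' a')
    (n : ℕ) (hcn : c ≤ n)
    (d : Fin c → ℕ) (a : Fin (n + 1) → ℕ)
    (hd : ∀ j, 0 < d j) (ha : ∀ i, 0 < a i)
    (hreg : IsHRegularPair h d a) (hnd : ∀ i, ¬ a i ∣ h)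
    (p : ℕ) (hp : p.Prime) (hph : p ∣ h)
    (hdelta : deltaPair d a
        - deltaOn (Finset.univ.filter (fun j => p ∣ d j)) d
            (Finset.univ.filter (fun i => p ∣ a i)) a ≤ 0) :
    deltaPair d a ≥ frobNum h a := by
  obtain ⟨k, rfl⟩ := hph
  have hk : 0 < k := Nat.pos_of_ne_zero (by rintro rfl; omega)
  have hg : univ.gcd a ≠ 0 := fun h0 => (ha 0).ne' (gcd_eq_zero_iff.mp h0 0 (mem_univ 0))
  have hIH : frobNum k (fun i => divIfDvd p (a i))
      ≤ deltaPair (fun j => divIfDvd p (d j)) (fun i => divIfDvd p (a i)) :=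
    IH k c n hk (lt_mul_left hk hp.one_lt) hc le_rfl hcn _ _ (fun j => divIfDvd_pos (hd j))
      (fun i => divIfDvd_pos (ha i)) (isHRegularOn_divIfDvd hp hreg)
      (fun i hi => hnd i ((dvd_mul_divIfDvd p (a i)).trans (mul_dvd_mul_left p hi)))
  have hamp : (p : ℤ) * deltaPair (fun j => divIfDvd p (d j)) (fun i => divIfDvd p (a i))
      ≤ deltaPair d a := by
    have hp1 : (0 : ℤ) ≤ p - 1 := by linarith [(Nat.one_le_cast (α := ℤ)).mpr hp.one_le]
    have hδ := mul_deltaOn_divIfDvd p univ d univ a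
    have := mul_nonpos_of_nonneg_of_nonpos hp1 hdelta
    unfold deltaPair at *
    linarith
  calc frobNum (p * k) a ≤ p * frobNum k (fun i => divIfDvd p (a i)) :=
        frobNum_le_mul_frobNum_divIfDvd hp hk.ne' hg
    _ ≤ p * deltaPair (fun j => divIfDvd p (d j)) (fun i => divIfDvd p (a i)) :=
        mul_le_mul_of_nonneg_left hIH (Int.natCast_nonneg p)
    _ ≤ deltaPair d a := hamp
end

section
/- Let h ≥ 2 and c ≥ 1 be integers. Assume that for every positive integer h' < h and every h'-regular pair (d';a') = (d_1',…,d_{c'}'; a_0',…,a_{n'}') with c' ≤ c, c' ≤ n' and a_i' ∤ h' for all i, one has δ(d';a') ≥ F^{h'}(a_0',…,a_{n'}'). Let (d;a) = (d_1,…,d_c; a_0,…,a_n) be an h-regular pair with c ≤ n and a_i ∤ h for all i, and suppose there exist weights a_{i_1},…,a_{i_k} with g := gcd(a_{i_1},…,a_{i_k}) > 1 such that δ(d;a) ≥ δ(d(g);a(g)) and the number of degrees divisible by g is strictly smaller than the number of weights divisible by g. Then δ(d;a) ≥ F^h(a_0,…,a_n). -/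
open Finset

/-!
Let `g₁` be the gcd of the weights divisible by `g`. There are fewer degrees divisible by `g₁`
than such weights, so `h`-regularity forces `g₁ ∣ h`. Dividing these weights, and the degrees
divisible by `g₁`, by `g₁` gives an `h / g₁`-regular pair with fewer degrees than weights, to which
the hypothesis applies. Since every non-representable multiple of `h` is `g₁` times a
non-representable multiple of `h / g₁` for the reduced weights,
`F^h(a) ≤ g₁ F^{h/g₁}(a(g)/g₁) ≤ g₁ δ(d(g₁)/g₁; a(g)/g₁) = δ(d(g₁); a(g)) ≤ δ(d(g); a(g)) ≤ δ(d; a)`.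
-/

section

variable {ι ι' κ κ' : Type*}

def IsRepresentableOn (A : Finset κ) (a : κ → ℕ) (z : ℤ) : Prop :=
  ∃ x : κ → ℕ, ((∑ i ∈ A, x i * a i : ℕ) : ℤ) = z

namespace IsRepresentableOn

variable {A B : Finset κ} {a : κ → ℕ} {z : ℤ}

lemma nonneg (hz : IsRepresentableOn A a z) : 0 ≤ z := by
  obtain ⟨x, rfl⟩ := hz
  positivity

lemma mono (hAB : A ⊆ B) (hz : IsRepresentableOn A a z) : IsRepresentableOn B a z := by
  classical
  obtain ⟨x, rfl⟩ := hz
  refine ⟨fun i => if i ∈ A then x i else 0, ?_⟩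
  rw [← sum_subset hAB fun i _ hi => by simp [hi]]
  exact congrArg _ (sum_congr rfl fun i hi => by simp [hi])

lemma mul_of_div {g : ℕ} {w : ℤ} (hga : ∀ i ∈ A, g ∣ a i)
    (hw : IsRepresentableOn A (fun i => a i / g) w) : IsRepresentableOn A a (g * w) := by
  obtain ⟨x, rfl⟩ := hw
  refine ⟨x, ?_⟩
  rw [← Nat.cast_mul, mul_sum]
  exact congrArg _ (sum_congr rfl fun i hi => by rw [mul_left_comm, Nat.mul_div_cancel' (hga i hi)])

lemma of_mem_closure {m : ℕ} (hm : m ∈ AddSubmonoid.closure (a '' A)) :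
    IsRepresentableOn A a m := by
  classical
  induction hm using AddSubmonoid.closure_induction with
  | mem _ hm =>
    obtain ⟨i, hi, rfl⟩ := hm
    exact ⟨Pi.single i 1, by simp [Pi.single_apply, mem_coe.mp hi]⟩
  | zero => exact ⟨0, by simp⟩
  | add m₁ m₂ _ _ ih₁ ih₂ =>
    obtain ⟨x, hx⟩ := ih₁
    obtain ⟨y, hy⟩ := ih₂
    refine ⟨x + y, ?_⟩
    rw [Nat.cast_add, ← hx, ← hy, ← Nat.cast_add, ← sum_add_distrib]
    simp only [Pi.add_apply, add_mul]

end IsRepresentableOn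

lemma Nat.setGcd_image_finset (A : Finset κ) (a : κ → ℕ) : Nat.setGcd (a '' A) = A.gcd a :=
  Nat.dvd_antisymm (Finset.dvd_gcd fun i hi => Nat.setGcd_dvd_of_mem (Set.mem_image_of_mem a hi))
    (Nat.dvd_setGcd_iff.mpr <| by rintro _ ⟨i, hi, rfl⟩; exact Finset.gcd_dvd hi)

/-- Schur's theorem. -/
lemma exists_forall_ge_isRepresentableOn (A : Finset κ) (a : κ → ℕ) :
    ∃ N : ℕ, ∀ m ≥ N, A.gcd a ∣ m → IsRepresentableOn A a m := by
  obtain ⟨N, hN⟩ := Nat.exists_mem_closure_of_ge (a '' A)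
  rw [Nat.setGcd_image_finset] at hN
  exact ⟨N, fun m hm hdvd => .of_mem_closure (hN m hm hdvd)⟩

section Frobenius

variable {h : ℕ} {A B : Finset κ} {a : κ → ℕ}

lemma frobOn_eq_sSup (h : ℕ) (A : Finset κ) (a : κ → ℕ) :
    frobOn h A a = sSup {z : ℤ | ((Nat.lcm (A.gcd a) h : ℕ) : ℤ) ∣ z ∧ ¬ IsRepresentableOn A a z} :=
  rfl

lemma le_frobOn {z : ℤ} (hz : ((Nat.lcm (A.gcd a) h : ℕ) : ℤ) ∣ z)
    (hnr : ¬ IsRepresentableOn A a z) : z ≤ frobOn h A a := by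
  obtain ⟨N, hN⟩ := exists_forall_ge_isRepresentableOn A a
  refine le_csSup ⟨N, fun w ⟨hw, hwnr⟩ => ?_⟩ ⟨hz, hnr⟩
  by_contra! hlt
  lift w to ℕ using by omega
  exact hwnr <| hN w (by omega) <|
    Int.natCast_dvd_natCast.mp ((Int.natCast_dvd_natCast.mpr (Nat.dvd_lcm_left _ h)).trans hw)

lemma frobOn_le_s15 {X : ℤ} (hlcm : 0 < Nat.lcm (A.gcd a) h)
    (hX : ∀ z : ℤ, ((Nat.lcm (A.gcd a) h : ℕ) : ℤ) ∣ z → ¬ IsRepresentableOn A a z → z ≤ X) :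
    frobOn h A a ≤ X := by
  rw [frobOn_eq_sSup]
  refine csSup_le ⟨-(Nat.lcm (A.gcd a) h : ℤ), by simp, fun hr => ?_⟩ fun z hz => hX z hz.1 hz.2
  have := hr.nonneg
  omega

lemma frobOn_le_mul_frobOn_div (hAB : A ⊆ B) (hh : 0 < h) (hAh : A.gcd a ∣ h) :
    frobOn h B a ≤ A.gcd a * frobOn (h / A.gcd a) A (fun i => a i / A.gcd a) := by
  set g := A.gcd a
  obtain ⟨k, rfl⟩ := hAh
  have hg : 0 < g := Nat.pos_of_mul_pos_right hh
  have hlcm : Nat.lcm (B.gcd a) (g * k) = g * k :=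
    Nat.lcm_eq_right ((gcd_mono hAB).trans (dvd_mul_right g k))
  have hcop : A.gcd (fun i => a i / g) = 1 := by
    obtain ⟨i, hi, hai⟩ := gcd_ne_zero_iff.mp hg.ne'
    exact gcd_div_eq_one hi hai
  rw [Nat.mul_div_cancel_left k hg]
  refine frobOn_le_s15 (by rwa [hlcm]) fun z hz hnr => ?_
  rw [hlcm, Nat.cast_mul] at hz
  obtain ⟨w, rfl⟩ := (dvd_mul_right _ _).trans hz
  have hw : ((Nat.lcm (A.gcd fun i => a i / g) k : ℕ) : ℤ) ∣ w := by
    rwa [hcop, Nat.lcm_one_left, ← mul_dvd_mul_iff_left (by positivity : (g : ℤ) ≠ 0)]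
  have hwnr : ¬ IsRepresentableOn A (fun i => a i / g) w :=
    fun hr => hnr ((hr.mul_of_div fun i hi => Finset.gcd_dvd hi).mono hAB)
  exact mul_le_mul_of_nonneg_left (le_frobOn hw hwnr) (by positivity)

lemma frobNum_comp_embedding [Fintype κ'] (h : ℕ) (e : κ' ↪ κ) (a : κ → ℕ) :
    frobNum h (a ∘ e) = frobOn h (univ.map e) a := by
  have hrep : ∀ z, IsRepresentableOn univ (a ∘ e) z ↔ IsRepresentableOn (univ.map e) a z := by
    refine fun z => ⟨fun ⟨x, hx⟩ => ⟨Function.extend e x 0, ?_⟩, fun ⟨x, hx⟩ => ⟨x ∘ e, ?_⟩⟩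
    · simpa [sum_map, e.injective.extend_apply] using hx
    · simpa [sum_map] using hx
  classical
  simp only [frobNum, frobOn_eq_sSup, hrep, map_eq_image, gcd_image]

end Frobenius

lemma Nat.not_div_dvd_div {a b g : ℕ} (hga : g ∣ a) (hgb : g ∣ b) (hab : ¬ a ∣ b) :
    ¬ a / g ∣ b / g := by
  rw [Nat.dvd_div_iff_mul_dvd hgb, Nat.mul_div_cancel' hga]
  exact hab

section Regularity

variable {h : ℕ} {D : Finset ι} {d : ι → ℕ} {A B : Finset κ} {a : κ → ℕ}

lemma IsHRegularOn.mono (hreg : IsHRegularOn h D d A a) (hBA : B ⊆ A) :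
    IsHRegularOn h D d B a :=
  fun I hI => hreg I (hI.trans hBA)

lemma IsHRegularOn.gcd_dvd_of_card_lt_s15 (hreg : IsHRegularOn h D d A a) {I : Finset κ}
    (hIA : I ⊆ A) (hI : I.Nonempty) (h1 : 1 < I.gcd a)
    (hcard : #{j ∈ D | I.gcd a ∣ d j} < #I) : I.gcd a ∣ h := by
  refine (hreg I hIA hI h1).resolve_left ?_
  rintro ⟨P, hPD, hPcard, hP⟩
  have := card_le_card fun j hj => mem_filter.mpr ⟨hPD hj, hP j hj⟩
  omega

lemma IsHRegularOn.exists_dvd_s15 (hreg : IsHRegularOn h D d A a) {i : κ} (hi : i ∈ A)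
    (h1 : 1 < a i) (hih : ¬ a i ∣ h) : ∃ j ∈ D, a i ∣ d j := by
  have hgcd : ({i} : Finset κ).gcd a = a i := by simp
  rcases hreg {i} (singleton_subset_iff.mpr hi) (singleton_nonempty i) (hgcd ▸ h1) with
    ⟨P, hPD, hPcard, hP⟩ | hdvd
  · obtain ⟨j, hj⟩ := card_pos.mp (by rw [hPcard, card_singleton]; exact one_pos)
    exact ⟨j, hPD hj, hgcd ▸ hP j hj⟩
  · exact absurd (hgcd ▸ hdvd) hih

lemma IsHRegularOn.div_s15 (hreg : IsHRegularOn h D d A a) {g : ℕ} (hg : 0 < g)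
    (hga : ∀ i ∈ A, g ∣ a i) :
    IsHRegularOn (h / g) {j ∈ D | g ∣ d j} (fun j => d j / g) A (fun i => a i / g) := by
  intro I hIA hI ht
  set t := I.gcd fun i => a i / g
  have hgcd : I.gcd a = g * t := by
    rw [← normalize_eq g, ← Finset.gcd_mul_left]
    exact gcd_congr rfl fun i hi => (Nat.mul_div_cancel' (hga i (hIA hi))).symm
  have h1 : 1 < I.gcd a := hgcd ▸ ht.trans_le (Nat.le_mul_of_pos_left t hg)
  rcases hreg I hIA hI h1 with ⟨P, hPD, hPcard, hP⟩ | hdvd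
  · refine .inl ⟨P, fun j hj => mem_filter.mpr ⟨hPD hj, ?_⟩, hPcard, fun j hj => ?_⟩
    · exact (dvd_mul_right g t).trans (hgcd ▸ hP j hj)
    · exact Nat.dvd_div_of_mul_dvd (hgcd ▸ hP j hj)
  · exact .inr (Nat.dvd_div_of_mul_dvd (hgcd ▸ hdvd))

lemma IsHRegularOn.comp_embedding [Fintype ι'] [Fintype κ'] {eD : ι' ↪ ι} {eA : κ' ↪ κ}
    (hreg : IsHRegularOn h (univ.map eD) d (univ.map eA) a) :
    IsHRegularPair h (d ∘ eD) (a ∘ eA) := by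
  classical
  intro I _ hI h1
  have hgcd : (I.map eA).gcd a = I.gcd (a ∘ eA) := by rw [map_eq_image, gcd_image]
  rcases hreg (I.map eA) (map_subset_map.mpr (subset_univ I)) (hI.map) (hgcd ▸ h1) with
    ⟨P, hPD, hPcard, hP⟩ | hdvd
  · obtain ⟨P, -, rfl⟩ := subset_map_iff.mp hPD
    refine .inl ⟨P, subset_univ P, by simpa using hPcard, fun j hj => ?_⟩
    exact hgcd ▸ hP (eD j) (mem_map_of_mem eD hj)
  · exact .inr (hgcd ▸ hdvd)

end Regularity

section Amplitude

variable {D D' : Finset ι} {d : ι → ℕ} {A : Finset κ} {a : κ → ℕ}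

lemma deltaOn_mono (hD : D' ⊆ D) : deltaOn D' d A a ≤ deltaOn D d A a :=
  sub_le_sub_right (sum_le_sum_of_subset_of_nonneg hD fun _ _ _ => by positivity) _

lemma deltaOn_div {g : ℕ} (hgd : ∀ j ∈ D, g ∣ d j) (hga : ∀ i ∈ A, g ∣ a i) :
    g * deltaOn D (fun j => d j / g) A (fun i => a i / g) = deltaOn D d A a := by
  simp only [deltaOn, mul_sub, mul_sum]
  congr 1 <;> refine sum_congr rfl fun j hj => ?_ <;> norm_cast
  exacts [Nat.mul_div_cancel' (hgd j hj), Nat.mul_div_cancel' (hga j hj)]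

lemma deltaPair_comp_embedding [Fintype ι'] [Fintype κ'] (eD : ι' ↪ ι) (eA : κ' ↪ κ)
    (d : ι → ℕ) (a : κ → ℕ) :
    deltaPair (d ∘ eD) (a ∘ eA) = deltaOn (univ.map eD) d (univ.map eA) a := by
  simp [deltaPair, deltaOn, sum_map]

end Amplitude

/-- Conjecture 4.11 for `h`-regular pairs of codimension at most `c`. -/
def AmplitudeBoundHolds (h c : ℕ) : Prop :=
  ∀ c' n' : ℕ, 1 ≤ c' → c' ≤ c → c' ≤ n' →
    ∀ (d' : Fin c' → ℕ) (a' : Fin (n' + 1) → ℕ),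
      (∀ j, 0 < d' j) → (∀ i, 0 < a' i) → IsHRegularPair h d' a' →
      (∀ i, ¬ a' i ∣ h) → deltaPair d' a' ≥ frobNum h a'

lemma AmplitudeBoundHolds.frobOn_le_deltaOn [LinearOrder ι] [LinearOrder κ] {h c : ℕ}
    (hbound : AmplitudeBoundHolds h c) {D : Finset ι} {d : ι → ℕ} {A : Finset κ} {a : κ → ℕ}
    (hD : D.Nonempty) (hDc : #D ≤ c) (hDA : #D < #A) (hd : ∀ j ∈ D, 0 < d j)
    (ha : ∀ i ∈ A, 0 < a i) (hreg : IsHRegularOn h D d A a) (hnd : ∀ i ∈ A, ¬ a i ∣ h) :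
    frobOn h A a ≤ deltaOn D d A a := by
  have hA : #A = #A - 1 + 1 := by omega
  set eD := (D.orderEmbOfFin rfl).toEmbedding
  set eA := (A.orderEmbOfFin hA).toEmbedding
  have heD : univ.map eD = D := map_orderEmbOfFin_univ D rfl
  have heA : univ.map eA = A := map_orderEmbOfFin_univ A hA
  have hbound' := hbound #D (#A - 1) (card_pos.mpr hD) hDc (by omega) (d ∘ eD) (a ∘ eA)
    (fun j => hd _ (D.orderEmbOfFin_mem rfl j)) (fun i => ha _ (A.orderEmbOfFin_mem hA i))
    (IsHRegularOn.comp_embedding (by rwa [heD, heA]))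
    (fun i => hnd _ (A.orderEmbOfFin_mem hA i))
  rwa [frobNum_comp_embedding, deltaPair_comp_embedding, heD, heA] at hbound'

end

theorem reduction_lemma_iii_general (h c : ℕ)
    (IH : ∀ (h' c' n' : ℕ), 0 < h' → h' < h → 1 ≤ c' → c' ≤ c → c' ≤ n' →
      ∀ (d' : Fin c' → ℕ) (a' : Fin (n' + 1) → ℕ),
        (∀ j, 0 < d' j) → (∀ i, 0 < a' i) → IsHRegularPair h' d' a' →
        (∀ i, ¬ a' i ∣ h') → deltaPair d' a' ≥ frobNum h' a')
    (n : ℕ)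
    (d : Fin c → ℕ) (a : Fin (n + 1) → ℕ)
    (hd : ∀ j, 0 < d j) (ha : ∀ i, 0 < a i)
    (hreg : IsHRegularPair h d a) (hnd : ∀ i, ¬ a i ∣ h)
    (g : ℕ) (hg : 1 < g)
    (hdelta : deltaPair d a
        ≥ deltaOn (Finset.univ.filter (fun j => g ∣ d j)) d
            (Finset.univ.filter (fun i => g ∣ a i)) a)
    (hcard : (Finset.univ.filter (fun j => g ∣ d j)).card
        < (Finset.univ.filter (fun i : Fin (n + 1) => g ∣ a i)).card) :
    deltaPair d a ≥ frobNum h a := by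
  set Ag := univ.filter fun i : Fin (n + 1) => g ∣ a i
  obtain ⟨i₀, hi₀⟩ : Ag.Nonempty := card_pos.mp (by omega)
  set g₁ := Ag.gcd a
  have hga : ∀ i ∈ Ag, g₁ ∣ a i := fun i hi => Finset.gcd_dvd hi
  have hgg₁ : g ∣ g₁ := Finset.dvd_gcd fun i hi => (mem_filter.mp hi).2
  have hg₁ : 1 < g₁ := hg.trans_le (Nat.le_of_dvd (Nat.pos_of_dvd_of_pos (hga i₀ hi₀) (ha i₀)) hgg₁)
  have hh : 0 < h := Nat.pos_of_ne_zero fun h0 => hnd i₀ (h0 ▸ dvd_zero _)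
  set D₁ := univ.filter fun j => g₁ ∣ d j
  have hgd : ∀ j ∈ D₁, g₁ ∣ d j := fun j hj => (mem_filter.mp hj).2
  have hD₁ : D₁ ⊆ univ.filter fun j => g ∣ d j :=
    monotone_filter_right _ fun _ _ hj => hgg₁.trans hj
  have hg₁h : g₁ ∣ h := hreg.gcd_dvd_of_card_lt_s15 (subset_univ Ag) ⟨i₀, hi₀⟩ hg₁
    ((card_le_card hD₁).trans_lt hcard)
  have hD₁ne : D₁.Nonempty := by
    have hai₀ : 1 < a i₀ := lt_of_le_of_ne (ha i₀) fun h1 => hnd i₀ (h1 ▸ one_dvd h)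
    obtain ⟨j, -, hj⟩ := hreg.exists_dvd_s15 (mem_univ i₀) hai₀ (hnd i₀)
    exact ⟨j, mem_filter.mpr ⟨mem_univ j, (hga i₀ hi₀).trans hj⟩⟩
  have hbound : AmplitudeBoundHolds (h / g₁) c := fun c' n' =>
    IH (h / g₁) c' n' (Nat.div_pos (Nat.le_of_dvd hh hg₁h) (by omega)) (Nat.div_lt_self hh hg₁)
  calc frobNum h a ≤ g₁ * frobOn (h / g₁) Ag (fun i => a i / g₁) :=
        frobOn_le_mul_frobOn_div (subset_univ Ag) hh hg₁h
    _ ≤ g₁ * deltaOn D₁ (fun j => d j / g₁) Ag (fun i => a i / g₁) := by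
        gcongr
        refine hbound.frobOn_le_deltaOn hD₁ne (card_le_univ D₁ |>.trans_eq (Fintype.card_fin c))
          ((card_le_card hD₁).trans_lt hcard)
          (fun j hj => Nat.div_pos (Nat.le_of_dvd (hd j) (hgd j hj)) (by omega))
          (fun i hi => Nat.div_pos (Nat.le_of_dvd (ha i) (hga i hi)) (by omega))
          ((hreg.mono (subset_univ Ag)).div_s15 (by omega) hga)
          fun i hi => Nat.not_div_dvd_div (hga i hi) hg₁h (hnd i)
    _ = deltaOn D₁ d Ag a := deltaOn_div hgd hga
    _ ≤ _ := deltaOn_mono hD₁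
    _ ≤ deltaPair d a := hdelta

/-- **Lemma 4.9(iii) (reduction to smaller regularity index).**
Assume Conjecture 4.11 holds for all `h'`-regular pairs of codimension at most `c` with
`h' < h`.  If `(d;a)` is an `h`-regular pair with `c ≤ n`, `aᵢ ∤ h` for all `i`, and
there are weights with `g := gcd(a_{i₁},…,a_{i_k}) > 1` such that
`δ(d;a) ≥ δ(d(g);a(g))` and `|d(g)| < |a(g)|`, then `δ(d;a) ≥ F^h(a₀,…,aₙ)`. -/
theorem reduction_lemma_iii (h c : ℕ) (hh : 2 ≤ h) (hc : 1 ≤ c)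
    (IH : ∀ (h' c' n' : ℕ), 0 < h' → h' < h → 1 ≤ c' → c' ≤ c → c' ≤ n' →
      ∀ (d' : Fin c' → ℕ) (a' : Fin (n' + 1) → ℕ),
        (∀ j, 0 < d' j) → (∀ i, 0 < a' i) → IsHRegularPair h' d' a' →
        (∀ i, ¬ a' i ∣ h') → deltaPair d' a' ≥ frobNum h' a')
    (n : ℕ) (hcn : c ≤ n)
    (d : Fin c → ℕ) (a : Fin (n + 1) → ℕ)
    (hd : ∀ j, 0 < d j) (ha : ∀ i, 0 < a i)
    (hreg : IsHRegularPair h d a) (hnd : ∀ i, ¬ a i ∣ h)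
    (S : Finset (Fin (n + 1))) (hS : S.Nonempty)
    (g : ℕ) (hgdef : g = S.gcd a) (hg : 1 < g)
    (hdelta : deltaPair d a
        ≥ deltaOn (Finset.univ.filter (fun j => g ∣ d j)) d
            (Finset.univ.filter (fun i => g ∣ a i)) a)
    (hcard : (Finset.univ.filter (fun j => g ∣ d j)).card
        < (Finset.univ.filter (fun i : Fin (n + 1) => g ∣ a i)).card) :
    deltaPair d a ≥ frobNum h a :=
  reduction_lemma_iii_general h c IH n d a hd ha hreg hnd g hg hdelta hcard
end

section
/- Let (d;a) = (d_1,…,d_c; a_0,…,a_n) be a regular pair with c < n. Let p and q be distinct primes, both dividing d_1, and suppose that the pair obtained from (d(p);a(p)) by replacing the degree d_1 with d_1/q is again regular. Then the pair (d';a) = (d_1/p, d_1/q, d_2,…,d_c; a_0,…,a_n), of codimension c+1, is regular and satisfies δ(d';a) < δ(d;a). -/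
/-!
Splitting `d₁` into `d₁/p` and `d₁/q` lowers the amplitude by `d₁ - d₁/p - d₁/q`, which is
positive because `1/p + 1/q ≤ 1/2 + 1/3 < 1` for distinct primes.

For regularity, let `I` be a set of weights with `g = a_I > 1`. If `p ∣ g`, all weights of `I`
lie in `a(p)`, and the regularity of the modified subpair gives `|I|` degrees among
`d₁/q, d₂, …, d_c` divisible by `g`. Otherwise `g` is coprime to `p`, so it still divides
`d₁/p` whenever it divides `d₁`: the degrees provided by the regularity of `(d;a)` survive,
with `d₁` moved to the new slot `d₁/p`.
-/

open Finset

open Function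

theorem Nat.div_add_div_lt_self {m p q : ℕ} (hm : 0 < m) (hp : 2 ≤ p) (hq : 2 ≤ q) (hpq : p ≠ q) :
    m / p + m / q < m := by
  have two_three {r s : ℕ} (hr : 2 ≤ r) (hs : 3 ≤ s) : m / r + m / s < m := by
    have := Nat.div_le_div_left hr two_pos (a := m)
    have := Nat.div_le_div_left hs three_pos (a := m)
    omega
  rcases hpq.lt_or_gt with h | h
  · exact two_three hp (by omega)
  · exact add_comm (m / p) _ ▸ two_three hq (by omega)

theorem Finset.exists_card_eq_forall_dvd_of_injective {ι ι' : Type*} [DecidableEq ι']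
    {σ : ι → ι'} (hσ : Injective σ) {P : Finset ι} {f : ι' → ℕ} {g : ℕ}
    (hP : ∀ j ∈ P, g ∣ f (σ j)) : ∃ P' : Finset ι', P'.card = P.card ∧ ∀ j ∈ P', g ∣ f j :=
  ⟨P.image σ, card_image_of_injective P hσ, by simpa using hP⟩

theorem Fin.injective_ite_zero_succ {c : ℕ} (z : Fin c) :
    Injective fun j : Fin c => if j = z then 0 else j.succ := by
  intro i j hij
  by_cases hi : i = z <;> by_cases hj : j = z <;> simp_all [eq_comm, Fin.succ_ne_zero]

theorem IsHRegularPair.cons_div_update {κ : Type*} [Fintype κ] {c h p v : ℕ} {d : Fin c → ℕ}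
    {a : κ → ℕ} {z : Fin c} (hreg : IsHRegularPair h d a) (hp : p.Prime) (hpd : p ∣ d z)
    (hsub : IsHRegularOn h (univ.filter fun j => p ∣ d j) (update d z v)
      (univ.filter fun i => p ∣ a i) a) :
    IsHRegularPair h (Fin.cons (d z / p) (update d z v)) a := by
  intro I _ hI hgcd
  by_cases hpg : p ∣ I.gcd a
  · have hIp : I ⊆ univ.filter fun i => p ∣ a i := fun i hi =>
      mem_filter.2 ⟨mem_univ i, hpg.trans (gcd_dvd hi)⟩
    refine (hsub I hIp hI hgcd).imp_left fun ⟨P, _, hcard, hdvd⟩ => ?_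
    obtain ⟨P', hP', hdvd'⟩ := exists_card_eq_forall_dvd_of_injective (Fin.succ_injective c)
      (f := Fin.cons (d z / p) (update d z v)) (by simpa using hdvd)
    exact ⟨P', subset_univ _, hP'.trans hcard, hdvd'⟩
  · refine (hreg I (subset_univ I) hI hgcd).imp_left fun ⟨P, _, hcard, hdvd⟩ => ?_
    have hdiv : I.gcd a ∣ d z → I.gcd a ∣ d z / p := fun hz =>
      (Nat.coprime_comm.1 (hp.coprime_iff_not_dvd.2 hpg)).dvd_of_dvd_mul_right
        ((Nat.div_mul_cancel hpd).symm ▸ hz)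
    obtain ⟨P', hP', hdvd'⟩ := exists_card_eq_forall_dvd_of_injective
      (Fin.injective_ite_zero_succ z) (f := Fin.cons (d z / p) (update d z v)) fun j hj => by
        by_cases hjz : j = z
        · subst hjz; simpa using hdiv (hdvd j hj)
        · simpa [hjz] using hdvd j hj
    exact ⟨P', subset_univ _, hP'.trans hcard, hdvd'⟩

theorem deltaPair_cons_update {κ : Type*} [Fintype κ] {c : ℕ} (d : Fin c → ℕ) (a : κ → ℕ)
    (z : Fin c) (e v : ℕ) :
    deltaPair (Fin.cons e (update d z v)) a = deltaPair d a + e + v - d z := by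
  have hsum : ∑ j, (Fin.cons e (update d z v) : Fin (c + 1) → ℕ) j + d z
      = ∑ j, d j + e + v := by
    rw [Fin.sum_cons, sum_update_of_mem (mem_univ z), ← add_sum_erase univ d (mem_univ z),
      sdiff_singleton_eq_erase]
    ring
  simp only [deltaPair, deltaOn]
  have := congrArg (Nat.cast : ℕ → ℤ) hsum
  push_cast at this
  linarith

theorem split_degree_lowers_amplitude_general (c n : ℕ) (hc : 0 < c)
    (d : Fin c → ℕ) (a : Fin (n + 1) → ℕ)
    (hd : ∀ j, 0 < d j)
    (hreg : IsHRegularPair 1 d a)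
    (p q : ℕ) (hp : p.Prime) (hq : q.Prime) (hpq : p ≠ q)
    (hpd : p ∣ d ⟨0, hc⟩)
    (hsub : IsHRegularOn 1 (Finset.univ.filter (fun j => p ∣ d j))
        (Function.update d ⟨0, hc⟩ (d ⟨0, hc⟩ / q))
        (Finset.univ.filter (fun i => p ∣ a i)) a) :
    IsHRegularPair 1
        (Fin.cons (d ⟨0, hc⟩ / p) (Function.update d ⟨0, hc⟩ (d ⟨0, hc⟩ / q))) a
    ∧ deltaPair (Fin.cons (d ⟨0, hc⟩ / p) (Function.update d ⟨0, hc⟩ (d ⟨0, hc⟩ / q))) a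
        < deltaPair d a := by
  refine ⟨hreg.cons_div_update hp hpd hsub, ?_⟩
  have hsplit : d ⟨0, hc⟩ / p + d ⟨0, hc⟩ / q < d ⟨0, hc⟩ :=
    Nat.div_add_div_lt_self (hd _) hp.two_le hq.two_le hpq
  rw [deltaPair_cons_update]
  omega

/-- **(Section 6) Lowering the amplitude by splitting a degree.**
Let `(d;a)` be a regular pair with `c < n`, let `p ≠ q` be primes dividing `d₁`, and
suppose the pair obtained from `(d(p);a(p))` by replacing the degree `d₁` with `d₁/q`
is again regular.  Then the codimension `c+1` pair
`(d';a) = (d₁/p, d₁/q, d₂,…,d_c; a₀,…,aₙ)` is regular and `δ(d';a) < δ(d;a)`. -/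
theorem split_degree_lowers_amplitude (c n : ℕ) (hc : 0 < c) (hcn : c < n)
    (d : Fin c → ℕ) (a : Fin (n + 1) → ℕ)
    (hd : ∀ j, 0 < d j) (ha : ∀ i, 0 < a i)
    (hreg : IsHRegularPair 1 d a)
    (p q : ℕ) (hp : p.Prime) (hq : q.Prime) (hpq : p ≠ q)
    (hpd : p ∣ d ⟨0, hc⟩) (hqd : q ∣ d ⟨0, hc⟩)
    (hsub : IsHRegularOn 1 (Finset.univ.filter (fun j => p ∣ d j))
        (Function.update d ⟨0, hc⟩ (d ⟨0, hc⟩ / q))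
        (Finset.univ.filter (fun i => p ∣ a i)) a) :
    IsHRegularPair 1
        (Fin.cons (d ⟨0, hc⟩ / p) (Function.update d ⟨0, hc⟩ (d ⟨0, hc⟩ / q))) a
    ∧ deltaPair (Fin.cons (d ⟨0, hc⟩ / p) (Function.update d ⟨0, hc⟩ (d ⟨0, hc⟩ / q))) a
        < deltaPair d a :=
  split_degree_lowers_amplitude_general c n hc d a hd hreg p q hp hq hpq hpd hsub
end
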